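/- arXiv:1203.1176 — 7 statements merged into one kernel-verified Lean document; each statement's English description precedes it below -/
import Mathlib

section
/- Let K be a field complete with respect to a non-archimedean absolute value |·|, with valuation ring O. Let f₁,…,f_m ∈ O[X₁,…,X_m] and suppose b ∈ O^m satisfies ‖(f₁(b),…,f_m(b))‖ < |det(J_b)|², where J_b is the Jacobian matrix of (f₁,…,f_m) at b and ‖·‖ is the maximum norm. Then there exists a unique a ∈ O^m with f_i(a) = 0 for all i and ‖a − b‖ = ‖J_b* · (f₁(b),…,f_m(b))ᵀ‖ / |det(J_b)|, where J_b* is the adjugate of J_b. -/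
/-!
Let `J` be the Jacobian at `b`, `δ = ‖det J‖` and `ρ = ‖J⁻¹ f(b)‖ = ‖J⋆ f(b)‖ / δ`; the
hypothesis gives `ρ < δ ≤ 1`. Polynomials with integral coefficients are `1`-Lipschitz on `O^m`
with quadratic Taylor remainder, and `‖J⁻¹ v‖ ≤ ‖v‖ / δ`. Hence the Newton map with fixed
Jacobian, `T x = x - J⁻¹ f(x)`, is a contraction with constant `ρ / δ < 1` on the closed ball
of radius `ρ` around `b`, which it preserves by the ultrametric inequality. Its unique fixed
point there is the unique zero of `f` in that ball, and it lies at distance exactly `ρ` from `b`.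
-/

/-- The maximum norm `‖(a₁,…,a_m)‖ = max_i ‖a_i‖` on `K^m` (as a supremum, which equals the
maximum for a nonempty finite index type). -/
noncomputable def supNorm {K : Type*} [NormedField K] {m : ℕ} (x : Fin m → K) : ℝ :=
  ⨆ i, ‖x i‖

open MvPolynomial Matrix Set Function Metric

lemma supNorm_eq_norm {K : Type*} [NormedField K] {m : ℕ} (x : Fin m → K) : supNorm x = ‖x‖ :=
  le_antisymm (Real.iSup_le (norm_le_pi_norm x) (norm_nonneg x))
    ((pi_norm_le_iff_of_nonneg (Real.iSup_nonneg fun _ => norm_nonneg _)).2 fun i =>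
      le_ciSup (f := fun i => ‖x i‖) (Finite.bddAbove_range _) i)

lemma norm_mul_le_of_norm_le_one {R : Type*} [SeminormedRing R] {a b : R} {C : ℝ}
    (ha : ‖a‖ ≤ 1) (hb : ‖b‖ ≤ C) : ‖a * b‖ ≤ C :=
  (norm_mul_le a b).trans ((mul_le_of_le_one_left (norm_nonneg _) ha).trans hb)

namespace IsUltrametricDist

variable {E : Type*} [SeminormedAddCommGroup E] [IsUltrametricDist E]

lemma norm_add_add_le {a b c : E} {C : ℝ} (ha : ‖a‖ ≤ C) (hb : ‖b‖ ≤ C) (hc : ‖c‖ ≤ C) :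
    ‖a + b + c‖ ≤ C :=
  (norm_add_le_max _ _).trans (max_le ((norm_add_le_max _ _).trans (max_le ha hb)) hc)

lemma norm_sub_le_one {x y : E} (hx : ‖x‖ ≤ 1) (hy : ‖y‖ ≤ 1) : ‖y - x‖ ≤ 1 :=
  calc ‖y - x‖ = ‖y + -x‖ := by rw [sub_eq_add_neg]
    _ ≤ 1 := (norm_add_le_max _ _).trans (max_le hy (by rwa [norm_neg]))

lemma norm_le_one_of_mem_closedBall {b x : E} {r : ℝ} (hb : ‖b‖ ≤ 1) (hr : r ≤ 1)
    (hx : x ∈ Metric.closedBall b r) : ‖x‖ ≤ 1 := by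
  rw [Metric.mem_closedBall, dist_eq_norm] at hx
  simpa using (norm_add_le_max (x - b) b).trans (max_le (hx.trans hr) hb)

end IsUltrametricDist

open IsUltrametricDist

section Taylor

variable {K : Type*} [NormedField K] [IsUltrametricDist K] {ι : Type*}

lemma norm_coeff_pderiv_le_one {g : MvPolynomial ι K} (hg : ∀ d, ‖g.coeff d‖ ≤ 1) (j : ι)
    (d : ι →₀ ℕ) :
    ‖(pderiv j g).coeff d‖ ≤ 1 := by
  rw [coeff_pderiv]
  exact norm_mul_le_of_norm_le_one (hg _) (by exact_mod_cast norm_natCast_le_one K (d j + 1))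

variable [Fintype ι]

/-- These bounds are stable under products, so they propagate from `C c` (`‖c‖ ≤ 1`) and `X i`
to every polynomial with integral coefficients. -/
def taylorSubring (x y : ι → K) (hxy : ‖y - x‖ ≤ 1) : Subring (MvPolynomial ι K) where
  carrier := {g | ‖eval x g‖ ≤ 1 ∧ ‖eval y g - eval x g‖ ≤ ‖y - x‖ ∧
    ‖eval y g - eval x g - ∑ j, eval x (pderiv j g) * (y j - x j)‖ ≤ ‖y - x‖ ^ 2}
  zero_mem' := by simp
  one_mem' := by simp
  neg_mem' := by
    rintro g ⟨hg₀, hg₁, hg₂⟩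
    have hΔ : eval y (-g) - eval x (-g) = -(eval y g - eval x g) := by
      simp only [map_neg]; ring
    have hR : eval y (-g) - eval x (-g) - ∑ j, eval x (pderiv j (-g)) * (y j - x j) =
        -(eval y g - eval x g - ∑ j, eval x (pderiv j g) * (y j - x j)) := by
      simp only [map_neg, neg_mul, Finset.sum_neg_distrib]; ring
    exact ⟨by simpa using hg₀, by rwa [hΔ, norm_neg], by rwa [hR, norm_neg]⟩
  add_mem' := by
    rintro p q ⟨hp₀, hp₁, hp₂⟩ ⟨hq₀, hq₁, hq₂⟩
    refine ⟨?_, ?_, ?_⟩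
    · simpa using (norm_add_le_max _ _).trans (max_le hp₀ hq₀)
    · have : eval y (p + q) - eval x (p + q) = (eval y p - eval x p) + (eval y q - eval x q) := by
        simp only [map_add]; ring
      exact this ▸ (norm_add_le_max _ _).trans (max_le hp₁ hq₁)
    · have : eval y (p + q) - eval x (p + q) - ∑ j, eval x (pderiv j (p + q)) * (y j - x j) =
          (eval y p - eval x p - ∑ j, eval x (pderiv j p) * (y j - x j)) +
            (eval y q - eval x q - ∑ j, eval x (pderiv j q) * (y j - x j)) := by
        simp only [map_add, add_mul, Finset.sum_add_distrib]; ring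
      exact this ▸ (norm_add_le_max _ _).trans (max_le hp₂ hq₂)
  mul_mem' := by
    rintro p q ⟨hp₀, hp₁, hp₂⟩ ⟨hq₀, hq₁, hq₂⟩
    have hΔΔ : ‖(eval y p - eval x p) * (eval y q - eval x q)‖ ≤ ‖y - x‖ ^ 2 := by
      rw [norm_mul, sq]; exact mul_le_mul hp₁ hq₁ (norm_nonneg _) (norm_nonneg _)
    have hsq : ‖y - x‖ ^ 2 ≤ ‖y - x‖ := by nlinarith [norm_nonneg (y - x)]
    refine ⟨?_, ?_, ?_⟩
    · rw [map_mul, norm_mul]; exact mul_le_one₀ hp₀ (norm_nonneg _) hq₀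
    · have : eval y (p * q) - eval x (p * q) = eval x p * (eval y q - eval x q) +
          eval x q * (eval y p - eval x p) + (eval y p - eval x p) * (eval y q - eval x q) := by
        simp only [map_mul]; ring
      rw [this]
      exact norm_add_add_le (norm_mul_le_of_norm_le_one hp₀ hq₁)
        (norm_mul_le_of_norm_le_one hq₀ hp₁) (hΔΔ.trans hsq)
    · have hlin : ∑ j, eval x (pderiv j (p * q)) * (y j - x j) =
          eval x p * ∑ j, eval x (pderiv j q) * (y j - x j) +
            eval x q * ∑ j, eval x (pderiv j p) * (y j - x j) := by
        simp only [Derivation.leibniz, smul_eq_mul, map_add, map_mul, Finset.mul_sum,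
          ← Finset.sum_add_distrib]
        exact Finset.sum_congr rfl fun j _ => by ring
      have : eval y (p * q) - eval x (p * q) - ∑ j, eval x (pderiv j (p * q)) * (y j - x j) =
          eval x p * (eval y q - eval x q - ∑ j, eval x (pderiv j q) * (y j - x j)) +
            eval x q * (eval y p - eval x p - ∑ j, eval x (pderiv j p) * (y j - x j)) +
              (eval y p - eval x p) * (eval y q - eval x q) := by
        rw [hlin]; simp only [map_mul]; ring
      rw [this]
      exact norm_add_add_le (norm_mul_le_of_norm_le_one hp₀ hq₂)
        (norm_mul_le_of_norm_le_one hq₀ hp₂) hΔΔ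

variable {x y : ι → K}

lemma C_mem_taylorSubring (hxy : ‖y - x‖ ≤ 1) {c : K} (hc : ‖c‖ ≤ 1) :
    C c ∈ taylorSubring x y hxy :=
  ⟨by simpa using hc, by simp, by simp⟩

lemma X_mem_taylorSubring (hxy : ‖y - x‖ ≤ 1) (hx : ‖x‖ ≤ 1) (i : ι) :
    X i ∈ taylorSubring x y hxy := by
  classical
  refine ⟨by simpa using (norm_le_pi_norm x i).trans hx,
    by simpa using norm_le_pi_norm (y - x) i, ?_⟩
  simp [pderiv_X, Pi.single_apply]

lemma mem_taylorSubring (hxy : ‖y - x‖ ≤ 1) (hx : ‖x‖ ≤ 1) {g : MvPolynomial ι K}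
    (hg : ∀ d, ‖g.coeff d‖ ≤ 1) : g ∈ taylorSubring x y hxy := by
  rw [g.as_sum]
  refine Subring.sum_mem _ fun d _ => ?_
  rw [monomial_eq]
  exact Subring.mul_mem _ (C_mem_taylorSubring hxy (hg d))
    (Subring.prod_mem _ fun i _ => Subring.pow_mem _ (X_mem_taylorSubring hxy hx i) _)

variable {g : MvPolynomial ι K}

lemma norm_eval_le_one (hg : ∀ d, ‖g.coeff d‖ ≤ 1) (hx : ‖x‖ ≤ 1) : ‖eval x g‖ ≤ 1 :=
  (mem_taylorSubring (by simp) hx hg (y := x)).1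

lemma norm_eval_sub_eval_le (hg : ∀ d, ‖g.coeff d‖ ≤ 1) (hx : ‖x‖ ≤ 1) (hy : ‖y‖ ≤ 1) :
    ‖eval y g - eval x g‖ ≤ ‖y - x‖ :=
  (mem_taylorSubring (norm_sub_le_one hx hy) hx hg).2.1

lemma norm_eval_sub_eval_sub_sum_le (hg : ∀ d, ‖g.coeff d‖ ≤ 1) (hx : ‖x‖ ≤ 1)
    (hy : ‖y‖ ≤ 1) :
    ‖eval y g - eval x g - ∑ j, eval x (pderiv j g) * (y j - x j)‖ ≤ ‖y - x‖ ^ 2 :=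
  (mem_taylorSubring (norm_sub_le_one hx hy) hx hg).2.2

end Taylor

namespace Matrix

variable {K : Type*} [NormedField K] {n : Type*} [Fintype n]

lemma norm_inv_mulVec [DecidableEq n] (A : Matrix n n K) (v : n → K) :
    ‖A⁻¹ *ᵥ v‖ = ‖A.adjugate *ᵥ v‖ / ‖A.det‖ := by
  rw [inv_def, Ring.inverse_eq_inv, smul_mulVec, norm_smul, norm_inv, div_eq_inv_mul]

variable [IsUltrametricDist K]

lemma norm_mulVec_le {m : Type*} [Fintype m] {A : Matrix m n K} {r : ℝ} (hr : 0 ≤ r)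
    (hA : ∀ i j, ‖A i j‖ ≤ r) (v : n → K) : ‖A *ᵥ v‖ ≤ r * ‖v‖ :=
  (pi_norm_le_iff_of_nonneg (by positivity)).2 fun i =>
    norm_sum_le_of_forall_le_of_nonneg (by positivity) fun j _ => by
      rw [norm_mul]; exact mul_le_mul (hA i j) (norm_le_pi_norm v j) (norm_nonneg _) hr

variable [DecidableEq n]

lemma norm_det_le_one {A : Matrix n n K} (hA : ∀ i j, ‖A i j‖ ≤ 1) : ‖A.det‖ ≤ 1 := by
  rw [det_apply]
  refine norm_sum_le_of_forall_le_of_nonneg zero_le_one fun σ _ => ?_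
  rw [Units.smul_def, zsmul_eq_mul]
  exact norm_mul_le_of_norm_le_one (norm_intCast_le_one K _)
    ((norm_prod _ _).trans_le (Finset.prod_le_one (fun _ _ => norm_nonneg _) fun i _ => hA _ _))

lemma norm_adjugate_apply_le_one {A : Matrix n n K} (hA : ∀ i j, ‖A i j‖ ≤ 1) (i j : n) :
    ‖A.adjugate i j‖ ≤ 1 := by
  rw [adjugate_apply]
  refine norm_det_le_one fun k l => ?_
  rw [updateRow_apply]
  split_ifs
  · rw [Pi.single_apply]; split_ifs <;> simp
  · exact hA k l

end Matrix

noncomputable section Newton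

variable {K : Type*} [NormedField K] {ι κ : Type*}

def polyMap (f : κ → MvPolynomial ι K) (x : ι → K) : κ → K :=
  fun i => eval x (f i)

def jacobianAt (f : κ → MvPolynomial ι K) (x : ι → K) : Matrix κ ι K :=
  Matrix.of fun i j => eval x (pderiv j (f i))

section Jacobian

variable [IsUltrametricDist K] [Fintype ι] {f : κ → MvPolynomial ι K} {x y : ι → K}

lemma norm_jacobianAt_apply_le_one (hf : ∀ i d, ‖(f i).coeff d‖ ≤ 1) (hx : ‖x‖ ≤ 1) (i : κ)
    (j : ι) : ‖jacobianAt f x i j‖ ≤ 1 :=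
  norm_eval_le_one (norm_coeff_pderiv_le_one (hf i) j) hx

lemma norm_jacobianAt_sub_apply_le (hf : ∀ i d, ‖(f i).coeff d‖ ≤ 1) (hx : ‖x‖ ≤ 1)
    (hy : ‖y‖ ≤ 1) (i : κ) (j : ι) : ‖(jacobianAt f y - jacobianAt f x) i j‖ ≤ ‖y - x‖ :=
  norm_eval_sub_eval_le (norm_coeff_pderiv_le_one (hf i) j) hx hy

lemma norm_polyMap_sub_sub_jacobianAt_mulVec_le [Fintype κ] (hf : ∀ i d, ‖(f i).coeff d‖ ≤ 1)
    (hx : ‖x‖ ≤ 1) (hy : ‖y‖ ≤ 1) :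
    ‖polyMap f y - polyMap f x - jacobianAt f x *ᵥ (y - x)‖ ≤ ‖y - x‖ ^ 2 :=
  (pi_norm_le_iff_of_nonneg (by positivity)).2 fun i => by
    simpa [polyMap, jacobianAt, Matrix.mulVec, dotProduct] using
      norm_eval_sub_eval_sub_sum_le (hf i) hx hy

end Jacobian

variable [Fintype ι] [DecidableEq ι] {f : ι → MvPolynomial ι K}

def newtonMap (f : ι → MvPolynomial ι K) (J : Matrix ι ι K) (x : ι → K) : ι → K :=
  x - J⁻¹ *ᵥ polyMap f x

lemma isFixedPt_newtonMap_iff {J : Matrix ι ι K} (hJ : IsUnit J.det) {x : ι → K} :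
    IsFixedPt (newtonMap f J) x ↔ polyMap f x = 0 := by
  rw [IsFixedPt, newtonMap, sub_eq_self]
  refine ⟨fun h => ?_, fun h => by rw [h, mulVec_zero]⟩
  rw [← one_mulVec (polyMap f x), ← mul_nonsing_inv J hJ, ← mulVec_mulVec, h, mulVec_zero]

lemma newtonMap_sub_newtonMap {J : Matrix ι ι K} (hJ : IsUnit J.det) (x y : ι → K) :
    newtonMap f J x - newtonMap f J y = J⁻¹ *ᵥ ((J - jacobianAt f y) *ᵥ (x - y) -
      (polyMap f x - polyMap f y - jacobianAt f y *ᵥ (x - y))) := by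
  have hJJ : J⁻¹ *ᵥ (J *ᵥ (x - y)) = x - y := by
    rw [mulVec_mulVec, nonsing_inv_mul J hJ, one_mulVec]
  have hlin : (J - jacobianAt f y) *ᵥ (x - y) -
      (polyMap f x - polyMap f y - jacobianAt f y *ᵥ (x - y)) =
        J *ᵥ (x - y) - (polyMap f x - polyMap f y) := by
    rw [sub_mulVec]; abel
  rw [hlin, mulVec_sub, hJJ, newtonMap, newtonMap, mulVec_sub]
  abel

section Ultrametric

variable [IsUltrametricDist K] {b x y : ι → K} {r : ℝ}

lemma dist_newtonMap_le (hf : ∀ i d, ‖(f i).coeff d‖ ≤ 1) (hb : ‖b‖ ≤ 1)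
    (hJ : IsUnit (jacobianAt f b).det) (hr : r ≤ 1) (hx : x ∈ closedBall b r)
    (hy : y ∈ closedBall b r) :
    dist (newtonMap f (jacobianAt f b) x) (newtonMap f (jacobianAt f b) y) ≤
      r / ‖(jacobianAt f b).det‖ * dist x y := by
  have hx1 := norm_le_one_of_mem_closedBall hb hr hx
  have hy1 := norm_le_one_of_mem_closedBall hb hr hy
  rw [mem_closedBall, dist_eq_norm] at hx hy
  have hxy : ‖x - y‖ ≤ r := by
    simpa using (norm_add_le_max (x - b) (b - y)).trans (max_le hx (by rwa [norm_sub_rev]))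
  have hJy : ‖(jacobianAt f b - jacobianAt f y) *ᵥ (x - y)‖ ≤ r * ‖x - y‖ :=
    norm_mulVec_le ((norm_nonneg _).trans hx) (fun i j =>
      (norm_jacobianAt_sub_apply_le hf hy1 hb i j).trans (by rwa [norm_sub_rev])) _
  have hTaylor : ‖polyMap f x - polyMap f y - jacobianAt f y *ᵥ (x - y)‖ ≤ r * ‖x - y‖ :=
    (norm_polyMap_sub_sub_jacobianAt_mulVec_le hf hy1 hx1).trans
      (by rw [sq]; exact mul_le_mul_of_nonneg_right hxy (norm_nonneg _))
  rw [dist_eq_norm, dist_eq_norm, newtonMap_sub_newtonMap hJ, norm_inv_mulVec, div_mul_eq_mul_div]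
  gcongr
  refine (norm_mulVec_le zero_le_one
    (norm_adjugate_apply_le_one (norm_jacobianAt_apply_le_one hf hb)) _).trans ?_
  rw [one_mul, sub_eq_add_neg]
  exact (norm_add_le_max _ _).trans (max_le hJy (by rwa [norm_neg]))

lemma le_one_of_lt_norm_det_jacobianAt (hf : ∀ i d, ‖(f i).coeff d‖ ≤ 1) (hb : ‖b‖ ≤ 1)
    (hr : r < ‖(jacobianAt f b).det‖) : r ≤ 1 :=
  hr.le.trans (norm_det_le_one (norm_jacobianAt_apply_le_one hf hb))

lemma mapsTo_newtonMap (hf : ∀ i d, ‖(f i).coeff d‖ ≤ 1) (hb : ‖b‖ ≤ 1)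
    (hr : r < ‖(jacobianAt f b).det‖) (hTb : dist (newtonMap f (jacobianAt f b) b) b ≤ r) :
    MapsTo (newtonMap f (jacobianAt f b)) (closedBall b r) (closedBall b r) := by
  have hr0 : 0 ≤ r := dist_nonneg.trans hTb
  intro x hx
  have hc : r / ‖(jacobianAt f b).det‖ * dist x b ≤ r :=
    (mul_le_of_le_one_left dist_nonneg ((div_le_one (hr0.trans_lt hr)).2 hr.le)).trans hx
  exact (IsUltrametricDist.dist_triangle_max _ (newtonMap f (jacobianAt f b) b) b).trans (max_le
    ((dist_newtonMap_le hf hb (isUnit_iff_ne_zero.2 (norm_pos_iff.1 (hr0.trans_lt hr)))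
      (le_one_of_lt_norm_det_jacobianAt hf hb hr) hx (mem_closedBall_self hr0)).trans hc) hTb)

lemma exists_isFixedPt_newtonMap [CompleteSpace K] (hf : ∀ i d, ‖(f i).coeff d‖ ≤ 1)
    (hb : ‖b‖ ≤ 1) (hr : r < ‖(jacobianAt f b).det‖)
    (hTb : dist (newtonMap f (jacobianAt f b) b) b ≤ r) :
    ∃ a ∈ closedBall b r, IsFixedPt (newtonMap f (jacobianAt f b)) a := by
  have hr0 : 0 ≤ r := dist_nonneg.trans hTb
  have hδ : 0 < ‖(jacobianAt f b).det‖ := hr0.trans_lt hr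
  have hsf := mapsTo_newtonMap hf hb hr hTb
  have hlip : LipschitzOnWith ⟨r / ‖(jacobianAt f b).det‖, by positivity⟩
      (newtonMap f (jacobianAt f b)) (closedBall b r) :=
    LipschitzOnWith.of_dist_le_mul fun x hx y hy => dist_newtonMap_le hf hb
      (isUnit_iff_ne_zero.2 (norm_pos_iff.1 hδ)) (le_one_of_lt_norm_det_jacobianAt hf hb hr) hx hy
  have hcontr : ContractingWith _ (hsf.restrict _ _ _) :=
    ⟨(div_lt_one hδ).2 hr, hlip.mapsToRestrict hsf⟩
  obtain ⟨a, ha, hfix, -⟩ := hcontr.exists_fixedPoint' isClosed_closedBall.isComplete hsf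
    (mem_closedBall_self hr0) (edist_ne_top _ _)
  exact ⟨a, ha, hfix⟩

lemma eq_of_isFixedPt_newtonMap (hf : ∀ i d, ‖(f i).coeff d‖ ≤ 1) (hb : ‖b‖ ≤ 1)
    (hr : r < ‖(jacobianAt f b).det‖) (hx : x ∈ closedBall b r) (hy : y ∈ closedBall b r)
    (hfx : IsFixedPt (newtonMap f (jacobianAt f b)) x)
    (hfy : IsFixedPt (newtonMap f (jacobianAt f b)) y) : x = y := by
  have hδ : 0 < ‖(jacobianAt f b).det‖ := dist_nonneg.trans hx |>.trans_lt hr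
  have hc : r / ‖(jacobianAt f b).det‖ < 1 := (div_lt_one hδ).2 hr
  have h := dist_newtonMap_le hf hb (isUnit_iff_ne_zero.2 (norm_pos_iff.1 hδ))
    (le_one_of_lt_norm_det_jacobianAt hf hb hr) hx hy
  rw [hfx.eq, hfy.eq] at h
  exact dist_le_zero.1 (by nlinarith [dist_nonneg (x := x) (y := y)])

/-- `newtonMap f J b` is at least as close to the fixed point as `b` is, so the ultrametric
inequality gives `dist (newtonMap f J b) b ≤ dist x b`. -/
lemma dist_eq_of_isFixedPt_newtonMap (hf : ∀ i d, ‖(f i).coeff d‖ ≤ 1) (hb : ‖b‖ ≤ 1)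
    (hTb : dist (newtonMap f (jacobianAt f b) b) b < ‖(jacobianAt f b).det‖)
    (hx : x ∈ closedBall b (dist (newtonMap f (jacobianAt f b) b) b))
    (hfx : IsFixedPt (newtonMap f (jacobianAt f b)) x) :
    dist x b = dist (newtonMap f (jacobianAt f b) b) b := by
  have hδ : 0 < ‖(jacobianAt f b).det‖ := dist_nonneg.trans_lt hTb
  have hc : dist (newtonMap f (jacobianAt f b) b) x ≤ dist x b := calc
    _ = dist (newtonMap f (jacobianAt f b) b) (newtonMap f (jacobianAt f b) x) := by
      rw [hfx.eq]
    _ ≤ _ := dist_newtonMap_le hf hb (isUnit_iff_ne_zero.2 (norm_pos_iff.1 hδ))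
      (le_one_of_lt_norm_det_jacobianAt hf hb hTb) (mem_closedBall_self dist_nonneg) hx
    _ ≤ dist b x := mul_le_of_le_one_left dist_nonneg ((div_le_one hδ).2 hTb.le)
    _ = dist x b := dist_comm b x
  exact le_antisymm hx ((IsUltrametricDist.dist_triangle_max _ x b).trans (max_le hc le_rfl))

lemma dist_newtonMap_self_lt (hf : ∀ i d, ‖(f i).coeff d‖ ≤ 1) (hb : ‖b‖ ≤ 1)
    (h : ‖polyMap f b‖ < ‖(jacobianAt f b).det‖ ^ 2) :
    dist (newtonMap f (jacobianAt f b) b) b < ‖(jacobianAt f b).det‖ := by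
  have hδ : 0 < ‖(jacobianAt f b).det‖ := by
    nlinarith [norm_nonneg (polyMap f b), norm_nonneg (jacobianAt f b).det]
  rw [dist_eq_norm, newtonMap, sub_sub_cancel_left, norm_neg, norm_inv_mulVec,
    div_lt_iff₀ hδ, ← sq]
  exact ((norm_mulVec_le zero_le_one
    (norm_adjugate_apply_le_one (norm_jacobianAt_apply_le_one hf hb)) _).trans_eq
      (one_mul _)).trans_lt h

end Ultrametric

end Newton

/-- multidimensional Hensel's Lemma.  Let `K` be a field complete with respect to a
non-archimedean absolute value, with valuation ring `O = {x : ‖x‖ ≤ 1}`.  Let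
`f₁,…,f_m ∈ O[X₁,…,X_m]` and suppose `b ∈ O^m` satisfies
`‖(f₁(b),…,f_m(b))‖ < ‖det J_b‖²`, where `J_b` is the Jacobian matrix at `b`.  Then there is a
unique `a ∈ O^m` with `f_i(a) = 0` for all `i` and
`‖a − b‖ = ‖J_b⋆ · (f₁(b),…,f_m(b))ᵀ‖ / ‖det J_b‖`, where `J_b⋆` is the adjugate of `J_b`. -/
theorem stmt0 {K : Type*} [NormedField K] [CompleteSpace K]
    (hna : IsNonarchimedean (fun x : K => ‖x‖)) {m : ℕ}
    (f : Fin m → MvPolynomial (Fin m) K)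
    (hf : ∀ i d, ‖(f i).coeff d‖ ≤ 1)
    (b : Fin m → K) (hb : ∀ i, ‖b i‖ ≤ 1)
    (J : Matrix (Fin m) (Fin m) K)
    (hJ : ∀ i j, J i j = MvPolynomial.eval b (MvPolynomial.pderiv j (f i)))
    (hlt : supNorm (fun i => MvPolynomial.eval b (f i)) < ‖J.det‖ ^ 2) :
    ∃! a : Fin m → K,
      (∀ i, ‖a i‖ ≤ 1) ∧ (∀ i, MvPolynomial.eval a (f i) = 0) ∧
      supNorm (fun i => a i - b i) =
        supNorm (J.adjugate.mulVec (fun i => MvPolynomial.eval b (f i))) / ‖J.det‖ := by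
  have := IsUltrametricDist.isUltrametricDist_of_isNonarchimedean_norm hna
  obtain rfl : J = jacobianAt f b := Matrix.ext hJ
  simp only [supNorm_eq_norm] at hlt ⊢
  replace hb : ‖b‖ ≤ 1 := (pi_norm_le_iff_of_nonneg zero_le_one).2 hb
  have hρ := dist_newtonMap_self_lt hf hb hlt
  have hunit : IsUnit (jacobianAt f b).det :=
    isUnit_iff_ne_zero.2 (norm_pos_iff.1 (dist_nonneg.trans_lt hρ))
  obtain ⟨a, ha, hfix⟩ := exists_isFixedPt_newtonMap hf hb hρ le_rfl
  have hdist : dist (newtonMap f (jacobianAt f b) b) b =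
      ‖(jacobianAt f b).adjugate *ᵥ polyMap f b‖ / ‖(jacobianAt f b).det‖ := by
    rw [dist_eq_norm, newtonMap, sub_sub_cancel_left, norm_neg, norm_inv_mulVec]
  refine ⟨a, ⟨fun i => ?_, fun i => ?_, ?_⟩, ?_⟩
  · exact (norm_le_pi_norm a i).trans
      (norm_le_one_of_mem_closedBall hb (le_one_of_lt_norm_det_jacobianAt hf hb hρ) ha)
  · exact congrFun ((isFixedPt_newtonMap_iff hunit).1 hfix) i
  · change ‖a - b‖ = ‖(jacobianAt f b).adjugate *ᵥ polyMap f b‖ / _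
    rw [← hdist, ← dist_eq_norm]
    exact dist_eq_of_isFixedPt_newtonMap hf hb hρ ha hfix
  · rintro y ⟨-, hy, hyb⟩
    have hy : IsFixedPt (newtonMap f (jacobianAt f b)) y :=
      (isFixedPt_newtonMap_iff hunit).2 (funext hy)
    refine eq_of_isFixedPt_newtonMap hf hb hρ ?_ ha hy hfix
    rw [mem_closedBall, dist_eq_norm, hdist]
    exact hyb.le
end

section
/- Let K be a field complete with respect to a non-archimedean absolute value, with valuation ring O, and let q be a prime power with F_q ⊆ K. Let A, B ∈ M_n(O) and consider the system A·Y^q − Y + B = 0 in the n² entries of Y, where Y^q denotes entry-wise q-th powers. If Y' ∈ M_n(O) satisfies ‖A·(Y')^q − Y' + B‖ < 1, then there exists a unique Y ∈ M_n(O) with A·Y^q − Y + B = 0 and ‖Y − Y'‖ = ‖A·(Y')^q − Y' + B‖. -/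
/-- The maximum norm of a matrix over a normed field: the maximum of the norms of its entries. -/
noncomputable def matSupNorm {K : Type*} [NormedField K] {n : ℕ}
    (M : Matrix (Fin n) (Fin n) K) : ℝ :=
  ⨆ i, ⨆ j, ‖M i j‖

/-!
Frobenius is additive in characteristic `p`, so `F Y = A * Y^q + B` satisfies
`‖F X - F Z‖ ≤ ‖X - Z‖ ^ q` for the ultrametric max norm. With `c = ‖F Y' - Y'‖ < 1`, `F` maps the
closed ball of radius `c` about `Y'` into itself and contracts it by `c ^ (q - 1)`, so it has a fixed
point there. Ultrametricity forces the fixed point to lie at distance exactly `c` from `Y'`, and two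
fixed points at distance `d < 1` satisfy `d ≤ d ^ q`, hence coincide.
-/

open Function Metric Set

section PowerLipschitz

variable {X : Type*} [MetricSpace X] {f : X → X} {q : ℕ}

theorem eq_of_isFixedPt_of_dist_lt_one (hq : 1 < q) (hf : ∀ x z, dist (f x) (f z) ≤ dist x z ^ q)
    {x z : X} (hx : IsFixedPt f x) (hz : IsFixedPt f z) (hxz : dist x z < 1) : x = z := by
  by_contra hne
  have hpos : 0 < dist x z := dist_pos.2 hne
  have hle := hf x z
  rw [hx.eq, hz.eq] at hle
  exact (pow_lt_self_of_lt_one₀ hpos hxz hq).not_ge hle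

variable [IsUltrametricDist X]

theorem dist_isFixedPt_eq (hq : 1 < q) (hf : ∀ x z, dist (f x) (f z) ≤ dist x z ^ q)
    {y₀ y : X} (hy : IsFixedPt f y) (hc : dist (f y₀) y₀ < 1) (hyy₀ : dist y y₀ ≤ dist (f y₀) y₀) :
    dist y y₀ = dist (f y₀) y₀ := by
  set c := dist (f y₀) y₀
  refine hyy₀.antisymm (not_lt.1 fun hlt => ?_)
  have hcpos : 0 < c := dist_nonneg.trans_lt hlt
  have himage : dist (f y₀) (f y) < c :=
    calc dist (f y₀) (f y) ≤ dist y₀ y ^ q := hf y₀ y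
      _ ≤ c ^ q := by rw [dist_comm]; gcongr
      _ < c := pow_lt_self_of_lt_one₀ hcpos hc hq
  rw [hy.eq] at himage
  exact ((IsUltrametricDist.dist_triangle_max (f y₀) y y₀).trans_lt (max_lt himage hlt)).false

theorem mapsTo_closedBall_of_dist_le_pow (hq : 1 ≤ q) (hf : ∀ x z, dist (f x) (f z) ≤ dist x z ^ q)
    {y₀ : X} (hc : dist (f y₀) y₀ ≤ 1) :
    MapsTo f (closedBall y₀ (dist (f y₀) y₀)) (closedBall y₀ (dist (f y₀) y₀)) := by
  intro x hx
  rw [mem_closedBall] at hx ⊢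
  refine (IsUltrametricDist.dist_triangle_max (f x) (f y₀) y₀).trans (max_le ?_ le_rfl)
  calc dist (f x) (f y₀) ≤ dist x y₀ ^ q := hf x y₀
    _ ≤ dist (f y₀) y₀ ^ q := by gcongr
    _ ≤ dist (f y₀) y₀ := pow_le_of_le_one dist_nonneg hc (by omega)

theorem contractingWith_restrict_closedBall (hq : 1 < q)
    (hf : ∀ x z, dist (f x) (f z) ≤ dist x z ^ q) {y₀ : X} (hc : dist (f y₀) y₀ < 1) :
    ContractingWith (nndist (f y₀) y₀ ^ (q - 1))
      ((mapsTo_closedBall_of_dist_le_pow hq.le hf hc.le).restrict f _ _) := by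
  set c := dist (f y₀) y₀
  refine ⟨pow_lt_one₀ zero_le (by rwa [← NNReal.coe_lt_one, coe_nndist]) (by omega),
    LipschitzWith.of_dist_le_mul fun x z => ?_⟩
  have hxz : dist (x : X) z ≤ c := (IsUltrametricDist.dist_triangle_max (x : X) y₀ z).trans
    (max_le (mem_closedBall.1 x.2) (mem_closedBall'.1 z.2))
  rw [Subtype.dist_eq, Subtype.dist_eq, NNReal.coe_pow, coe_nndist]
  calc dist (f x) (f z) ≤ dist (x : X) z ^ q := hf x z
    _ = dist (x : X) z ^ (q - 1) * dist (x : X) z := by rw [← pow_succ]; congr; omega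
    _ ≤ c ^ (q - 1) * dist (x : X) z := by gcongr

theorem existsUnique_isFixedPt_dist_eq [CompleteSpace X] (hq : 1 < q)
    (hf : ∀ x z, dist (f x) (f z) ≤ dist x z ^ q) {y₀ : X} (hc : dist (f y₀) y₀ < 1) :
    ∃! y, IsFixedPt f y ∧ dist y y₀ = dist (f y₀) y₀ := by
  obtain ⟨y, hyball, hy, -⟩ := (contractingWith_restrict_closedBall hq hf hc).exists_fixedPoint'
    isClosed_closedBall.isComplete _ (mem_closedBall_self dist_nonneg) (edist_ne_top _ _)
  have hyy₀ := dist_isFixedPt_eq hq hf hy hc (mem_closedBall.1 hyball)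
  refine ⟨y, ⟨hy, hyy₀⟩, fun z ⟨hz, hzy₀⟩ => eq_of_isFixedPt_of_dist_lt_one hq hf hz hy ?_⟩
  calc dist z y ≤ max (dist z y₀) (dist y₀ y) := IsUltrametricDist.dist_triangle_max z y₀ y
    _ < 1 := by rw [dist_comm y₀, hzy₀, hyy₀, max_self]; exact hc

end PowerLipschitz

theorem norm_le_matSupNorm {K : Type*} [NormedField K] {n : ℕ} (M : Matrix (Fin n) (Fin n) K)
    (i j : Fin n) : ‖M i j‖ ≤ matSupNorm M :=
  (le_ciSup (Finite.bddAbove_range fun j => ‖M i j‖) j).trans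
    (le_ciSup (Finite.bddAbove_range fun i => ⨆ j, ‖M i j‖) i)

section MatrixNorm

attribute [local instance] Matrix.normedAddCommGroup

variable {K : Type*} [NormedField K]

theorem matSupNorm_eq_norm {n : ℕ} (M : Matrix (Fin n) (Fin n) K) : matSupNorm M = ‖M‖ :=
  le_antisymm
    (Real.iSup_le (fun _ => Real.iSup_le (fun _ => M.norm_entry_le_entrywise_sup_norm)
      (norm_nonneg M)) (norm_nonneg M))
    ((Matrix.norm_le_iff (Real.iSup_nonneg fun _ => Real.iSup_nonneg fun _ => norm_nonneg _)).2
      (norm_le_matSupNorm M))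

variable {l m n : Type*} [Fintype l] [Fintype m] [Fintype n]

theorem Matrix.norm_map_pow_le (M : Matrix m n K) (q : ℕ) : ‖M.map (· ^ q)‖ ≤ ‖M‖ ^ q :=
  (Matrix.norm_le_iff (by positivity)).2 fun i j => by
    rw [Matrix.map_apply, norm_pow]
    exact pow_le_pow_left₀ (norm_nonneg _) M.norm_entry_le_entrywise_sup_norm q

variable [IsUltrametricDist K]

theorem Matrix.norm_mul_le_of_isUltrametricDist (A : Matrix l m K) (M : Matrix m n K) :
    ‖A * M‖ ≤ ‖A‖ * ‖M‖ := by
  refine (Matrix.norm_le_iff (by positivity)).2 fun i j => ?_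
  refine IsUltrametricDist.norm_sum_le_of_forall_le_of_nonneg (by positivity) fun k _ => ?_
  rw [norm_mul]
  exact mul_le_mul A.norm_entry_le_entrywise_sup_norm M.norm_entry_le_entrywise_sup_norm
    (norm_nonneg _) (norm_nonneg _)

variable {p : ℕ} [ExpChar K p] (e : ℕ) {A : Matrix m m K}

theorem Matrix.dist_mul_map_iterateFrobenius_add_le (hA : ‖A‖ ≤ 1) (B X Z : Matrix m m K) :
    dist (A * X.map (· ^ p ^ e) + B) (A * Z.map (· ^ p ^ e) + B) ≤ dist X Z ^ p ^ e := by
  rw [dist_eq_norm, dist_eq_norm, add_sub_add_right_eq_sub, ← Matrix.mul_sub,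
    ← Matrix.map_sub (· ^ p ^ e) (sub_pow_expChar_pow · · e)]
  calc ‖A * (X - Z).map (· ^ p ^ e)‖ ≤ ‖A‖ * ‖(X - Z).map (· ^ p ^ e)‖ :=
        A.norm_mul_le_of_isUltrametricDist _
    _ ≤ 1 * ‖X - Z‖ ^ p ^ e := by gcongr; exact Matrix.norm_map_pow_le _ _
    _ = ‖X - Z‖ ^ p ^ e := one_mul _

theorem Matrix.existsUnique_mul_map_iterateFrobenius_add_eq_self [CompleteSpace K]
    (hq : 1 < p ^ e) (hA : ∀ i j, ‖A i j‖ ≤ 1) (B Y' : Matrix m m K)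
    (hY' : ‖A * Y'.map (· ^ p ^ e) + B - Y'‖ < 1) :
    ∃! Y, A * Y.map (· ^ p ^ e) + B = Y ∧ ‖Y - Y'‖ = ‖A * Y'.map (· ^ p ^ e) + B - Y'‖ := by
  have : IsUltrametricDist (Matrix m m K) := Pi.instIsUltrametricDist
  -- `Matrix` carries its own global uniform structure; we need the one induced by the norm.
  have : @CompleteSpace (Matrix m m K) PseudoMetricSpace.toUniformSpace :=
    inferInstanceAs (CompleteSpace (m → m → K))
  simp only [← dist_eq_norm] at hY' ⊢
  exact existsUnique_isFixedPt_dist_eq hq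
    (Matrix.dist_mul_map_iterateFrobenius_add_le e ((Matrix.norm_le_iff zero_le_one).2 hA) B) hY'

end MatrixNorm

theorem stmt1_general {K : Type*} [NormedField K] [CompleteSpace K]
    (hna : IsNonarchimedean (fun x : K => ‖x‖))
    (p e : ℕ) [Fact p.Prime] [CharP K p] (he : e ≠ 0) {n : ℕ}
    (A B : Matrix (Fin n) (Fin n) K)
    (hA : ∀ i j, ‖A i j‖ ≤ 1)
    (Y' : Matrix (Fin n) (Fin n) K) (hY' : ∀ i j, ‖Y' i j‖ ≤ 1)
    (hlt : matSupNorm (A * Y'.map (fun x => x ^ p ^ e) - Y' + B) < 1) :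
    ∃! Y : Matrix (Fin n) (Fin n) K,
      (∀ i j, ‖Y i j‖ ≤ 1) ∧
      A * Y.map (fun x => x ^ p ^ e) - Y + B = 0 ∧
      matSupNorm (Y - Y') = matSupNorm (A * Y'.map (fun x => x ^ p ^ e) - Y' + B) := by
  have := IsUltrametricDist.isUltrametricDist_of_isNonarchimedean_norm hna
  have hq : 1 < p ^ e := Nat.one_lt_pow he (Fact.out : p.Prime).one_lt
  have hresidual : ∀ Y : Matrix (Fin n) (Fin n) K,
      A * Y.map (· ^ p ^ e) - Y + B = A * Y.map (· ^ p ^ e) + B - Y :=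
    fun Y => sub_add_eq_add_sub _ _ _
  simp only [hresidual, matSupNorm_eq_norm, sub_eq_zero] at hlt ⊢
  obtain ⟨Y, ⟨hY, hYY'⟩, huniq⟩ :=
    Matrix.existsUnique_mul_map_iterateFrobenius_add_eq_self e hq hA B Y' hlt
  refine ⟨Y, ⟨fun i j => ?_, hY, hYY'⟩, fun Z ⟨_, hZ, hZY'⟩ => huniq Z ⟨hZ, hZY'⟩⟩
  calc ‖Y i j‖ = ‖(Y - Y') i j + Y' i j‖ := by rw [Matrix.sub_apply, sub_add_cancel]
    _ ≤ max ‖(Y - Y') i j‖ ‖Y' i j‖ := hna _ _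
    _ ≤ 1 := max_le (((norm_le_matSupNorm _ i j).trans (matSupNorm_eq_norm _).le).trans
        (hYY'.trans_le hlt.le)) (hY' i j)

/-- Let `K` be a field complete with respect to a non-archimedean absolute value,
with valuation ring `O`, containing `F_q` (so `K` has characteristic `p` and `q = p^e`).  Let
`A, B ∈ M_n(O)` and consider the system `A·Y^q − Y + B = 0` (entry-wise `q`-th powers).  If
`Y' ∈ M_n(O)` satisfies `‖A·(Y')^q − Y' + B‖ < 1`, then there is a unique `Y ∈ M_n(O)` with
`A·Y^q − Y + B = 0` and `‖Y − Y'‖ = ‖A·(Y')^q − Y' + B‖`. -/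
theorem stmt1 {K : Type*} [NormedField K] [CompleteSpace K]
    (hna : IsNonarchimedean (fun x : K => ‖x‖))
    (p e : ℕ) [Fact p.Prime] [CharP K p] (he : e ≠ 0) {n : ℕ}
    (A B : Matrix (Fin n) (Fin n) K)
    (hA : ∀ i j, ‖A i j‖ ≤ 1) (hB : ∀ i j, ‖B i j‖ ≤ 1)
    (Y' : Matrix (Fin n) (Fin n) K) (hY' : ∀ i j, ‖Y' i j‖ ≤ 1)
    (hlt : matSupNorm (A * Y'.map (fun x => x ^ p ^ e) - Y' + B) < 1) :
    ∃! Y : Matrix (Fin n) (Fin n) K,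
      (∀ i j, ‖Y i j‖ ≤ 1) ∧
      A * Y.map (fun x => x ^ p ^ e) - Y + B = 0 ∧
      matSupNorm (Y - Y') = matSupNorm (A * Y'.map (fun x => x ^ p ^ e) - Y' + B) :=
  stmt1_general hna p e he A B hA Y' hY' hlt
end

section
/- Let K be an algebraically closed field containing F_q and let D₀ ∈ GL_n(K). Then there exists Y₀ ∈ GL_n(K) with D₀·φ_q(Y₀) = Y₀, where φ_q(Y₀) is the entry-wise q-th power of Y₀. Moreover, if D₀ has entries in a valuation ring O ⊆ K with D₀ ∈ GL_n(O) and O is integrally closed in K, then any such Y₀ lies in GL_n(O). -/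
/-!
Let `ψ v = D₀ · v^{(q)}`, a Frobenius-semilinear injection of `Kⁿ`; the solutions `Y` are the
matrices whose columns are a basis of `ψ`-fixed vectors, so it suffices that the fixed vectors
span `Kⁿ`. If their span `W` were proper, `ψ` would induce an injective semilinear map on
`Kⁿ ⧸ W`. There a cyclic relation `ψ^m u = ∑_{i<m} b_i ψ^i u` reduces the search for a fixed vector
to one additive polynomial equation `Q_m(t) = t`, which has a nonzero root because `0` is a simple
root. The lifted vector `v ∉ W` satisfies `ψ v - v ∈ W`, and Artin–Schreier equations
`d^q - d = c` correct it inside `W` to a fixed vector, a contradiction.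

For integrality, `O` is a valuation ring. At an entry `y` of `Y` of largest valuation,
`y^q = (D₀⁻¹ Y)_{ij}` gives `v(y)^q ≤ v(y)`, hence `v(y) ≤ 1`. The same argument applies to
`(Y⁻¹)ᵀ`, which satisfies `((Y⁻¹)ᵀ)^{(q)} = D₀ᵀ (Y⁻¹)ᵀ`.
-/

open Polynomial Submodule Function Finset
open scoped Matrix

theorem exists_pow_sub_self_eq {K : Type*} [Field K] [IsAlgClosed K] {q : ℕ} (hq : 2 ≤ q)
    (c : K) : ∃ d : K, d ^ q - d = c := by
  have hdeg : (X ^ q - X - C c : K[X]).degree = (q : WithBot ℕ) := by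
    rw [sub_sub, degree_sub_eq_left_of_degree_lt] <;> rw [degree_X_pow]
    rw [degree_X_add_C]; exact_mod_cast hq
  obtain ⟨d, hd⟩ := IsAlgClosed.exists_root (X ^ q - X - C c) (by rw [hdeg]; norm_cast; omega)
  exact ⟨d, sub_eq_zero.1 (by simpa using hd)⟩

namespace Polynomial

theorem exists_ne_zero_isRoot_of_eval_zero {K : Type*} [Field K] [IsAlgClosed K] {F : K[X]}
    (h0 : F.eval 0 = 0) (h1 : (derivative F).eval 0 ≠ 0) (h2 : 2 ≤ F.natDegree) :
    ∃ t ≠ 0, F.IsRoot t := by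
  obtain ⟨G, rfl⟩ : X ∣ F := X_dvd_iff.2 (by rwa [coeff_zero_eq_eval_zero])
  have hG0 : G.eval 0 ≠ 0 := by simpa [derivative_mul] using h1
  have hG : G.degree ≠ 0 := by
    have : G ≠ 0 := by rintro rfl; simp at hG0
    rw [natDegree_mul X_ne_zero this, natDegree_X] at h2
    rw [degree_eq_natDegree this]; norm_cast; omega
  obtain ⟨t, ht⟩ := IsAlgClosed.exists_root G hG
  refine ⟨t, ?_, by simp [ht.eq_zero]⟩
  rintro rfl
  exact hG0 ht

section LangPoly

variable {R : Type*} [CommSemiring R] {q : ℕ} {b : ℕ → R}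

/-- `Q₀ = 0`, `Q_{i+1} = Q_i^q + b_i X^q`. If `ψ` is `q`-power-semilinear,
`ψ^m u = ∑_{i<m} b_i ψ^i u` and `Q_m(t) = t`, then `∑_{i<m} Q_{i+1}(t) ψ^i u` is `ψ`-fixed. -/
noncomputable def langPoly (q : ℕ) (b : ℕ → R) : ℕ → R[X]
  | 0 => 0
  | i + 1 => langPoly q b i ^ q + C (b i) * X ^ q

@[simp] theorem langPoly_zero : langPoly q b 0 = 0 := rfl

theorem langPoly_succ (i : ℕ) : langPoly q b (i + 1) = langPoly q b i ^ q + C (b i) * X ^ q :=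
  rfl

theorem eval_zero_langPoly (hq : q ≠ 0) (i : ℕ) : (langPoly q b i).eval 0 = 0 := by
  induction i with
  | zero => simp
  | succ i ih => simp [langPoly_succ, ih, hq]

theorem derivative_langPoly (hq : (q : R) = 0) (i : ℕ) : derivative (langPoly q b i) = 0 := by
  induction i with
  | zero => simp
  | succ i ih => simp [langPoly_succ, derivative_pow, ih, hq]

theorem natDegree_langPoly [NoZeroDivisors R] (hq : 2 ≤ q) (hb : b 0 ≠ 0) (i : ℕ) :
    (langPoly q b (i + 1)).natDegree = q ^ (i + 1) := by
  induction i with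
  | zero => simp [langPoly_succ, zero_pow (by omega : q ≠ 0), hb]
  | succ i ih =>
    have hlt : (C (b (i + 1)) * X ^ q).natDegree < (langPoly q b (i + 1) ^ q).natDegree := by
      rw [natDegree_pow, ih]
      calc (C (b (i + 1)) * X ^ q).natDegree ≤ q := natDegree_C_mul_X_pow_le _ _
        _ < q * q ^ (i + 1) :=
          lt_mul_of_one_lt_right (by omega) (Nat.one_lt_pow (by omega) (by omega))
    rw [langPoly_succ, natDegree_add_eq_left_of_natDegree_lt hlt, natDegree_pow, ih,
      pow_succ' q (i + 1)]

end LangPoly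

theorem exists_ne_zero_eval_langPoly_eq_self {K : Type*} [Field K] [IsAlgClosed K] {q : ℕ}
    {b : ℕ → K} (hq : 2 ≤ q) (hqK : (q : K) = 0) (hb : b 0 ≠ 0) (m : ℕ) :
    ∃ t ≠ 0, (langPoly q b (m + 1)).eval t = t := by
  have hdeg : (langPoly q b (m + 1)).natDegree = q ^ (m + 1) := natDegree_langPoly hq hb m
  obtain ⟨t, ht, hroot⟩ := exists_ne_zero_isRoot_of_eval_zero (F := langPoly q b (m + 1) - X)
    (by simp [eval_zero_langPoly (by omega : q ≠ 0)]) (by simp [derivative_langPoly hqK])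
    (by
      rw [natDegree_sub_eq_left_of_natDegree_lt] <;> rw [hdeg]
      · exact hq.trans (Nat.le_self_pow (by omega) q)
      · simp only [natDegree_X]; exact Nat.one_lt_pow (by omega) (by omega))
  exact ⟨t, ht, sub_eq_zero.1 (by simpa using hroot)⟩

end Polynomial

theorem exists_mem_span_image_range {R M : Type*} [Semiring R] [AddCommMonoid M] [Module R M]
    [IsNoetherian R M] (w : ℕ → M) : ∃ m, w m ∈ span R (w '' ↑(range m)) := by
  obtain ⟨m, hm⟩ := monotone_stabilizes_iff_noetherian.mpr inferInstance
    ⟨fun k => span R (w '' ↑(range k)), fun k l hkl =>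
      span_mono (Set.image_mono (by simpa using hkl))⟩
  refine ⟨m, ?_⟩
  rw [show span R (w '' ↑(range m)) = span R (w '' ↑(range (m + 1))) from hm _ m.le_succ]
  exact subset_span ⟨m, by simp, rfl⟩

instance {K : Type*} [CommSemiring K] (p e : ℕ) [ExpChar K p] [PerfectRing K p] :
    RingHomSurjective (iterateFrobenius K p e) :=
  ⟨(bijective_iterateFrobenius K p e).2⟩

section Semilinear

variable {K V : Type*} [Field K] [AddCommGroup V] [Module K V]

theorem sum_range_succ_smul_ne_zero {w : ℕ → V} {M : ℕ} (hM : w M ∉ span K (w '' ↑(range M)))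
    {c : ℕ → K} (hc : c M ≠ 0) : ∑ i ∈ range (M + 1), c i • w i ≠ 0 := by
  intro h
  rw [sum_range_succ, add_eq_zero_iff_neg_eq] at h
  refine hM ((smul_mem_iff _ hc).1 ?_)
  rw [← h]
  exact neg_mem (sum_mem fun i hi => smul_mem _ _ (subset_span ⟨i, hi, rfl⟩))

theorem comap_span_fixedPoints {σ : K →+* K} [RingHomSurjective σ] {ψ : V →ₛₗ[σ] V}
    (hψ : Injective ψ) : (span K (fixedPoints ψ)).comap ψ = span K (fixedPoints ψ) := by
  refine le_antisymm (fun x hx => ?_) (span_le.2 fun y hy => ?_)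
  · have hle : span K (fixedPoints ψ) ≤ (span K (fixedPoints ψ)).map ψ :=
      span_le.2 fun y hy => ⟨y, subset_span hy, hy⟩
    obtain ⟨y, hy, hyx⟩ := hle hx
    exact hψ hyx ▸ hy
  · rw [SetLike.mem_coe, mem_comap, show ψ y = y from hy]
    exact subset_span hy

section ExpChar

variable {p e : ℕ} [ExpChar K p] (ψ : V →ₛₗ[iterateFrobenius K p e] V)

theorem isFixedPt_sum_eval_langPoly_smul_iterate (u : V) {m : ℕ} {b : ℕ → K}
    (hb : ∑ i ∈ range m, b i • ψ^[i] u = ψ^[m] u) {t : K}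
    (ht : (langPoly (p ^ e) b m).eval t = t) :
    IsFixedPt ψ (∑ i ∈ range m, (langPoly (p ^ e) b (i + 1)).eval t • ψ^[i] u) := by
  set a : ℕ → K := fun i => (langPoly (p ^ e) b i).eval t
  refine Eq.symm ?_
  calc ∑ i ∈ range m, a (i + 1) • ψ^[i] u
      = ∑ i ∈ range m, a i ^ p ^ e • ψ^[i] u + t ^ p ^ e • ψ^[m] u := by
        simp only [a, langPoly_succ, eval_add, eval_pow, eval_mul, eval_C, eval_X, add_smul,
          sum_add_distrib, ← hb, smul_sum, mul_comm (b _), mul_smul]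
    _ = ∑ i ∈ range (m + 1), a i ^ p ^ e • ψ^[i] u := by
        rw [sum_range_succ, show a m = t from ht]
    _ = ∑ i ∈ range m, a (i + 1) ^ p ^ e • ψ^[i + 1] u := by
        simp [sum_range_succ', a, zero_pow (expChar_pow_pos K p e).ne']
    _ = ψ (∑ i ∈ range m, a (i + 1) • ψ^[i] u) := by
        simp [map_sum, iterateFrobenius_def, iterate_succ_apply']

theorem coeff_zero_ne_zero_of_iterate_eq_sum [PerfectRing K p] (hψ : Injective ψ) {u : V}
    {M : ℕ} (hM : ψ^[M] u ∉ span K ((ψ^[·] u) '' ↑(range M))) {b : ℕ → K}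
    (hb : ∑ i ∈ range (M + 1), b i • ψ^[i] u = ψ^[M + 1] u) : b 0 ≠ 0 := by
  intro hb0
  choose r hr using fun i => (bijective_iterateFrobenius K p e).2 (b (i + 1))
  have hψM : ψ (ψ^[M] u) = ψ (∑ i ∈ range M, r i • ψ^[i] u) := by
    rw [← iterate_succ_apply' ψ, ← hb, sum_range_succ', hb0, zero_smul, add_zero, map_sum]
    simp [hr, iterate_succ_apply']
  rw [hψ hψM] at hM
  exact hM (sum_mem fun i hi => smul_mem _ (r i) (subset_span ⟨i, hi, rfl⟩))

end ExpChar

section CharP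

variable {p e : ℕ} [Fact p.Prime] [CharP K p] (ψ : V →ₛₗ[iterateFrobenius K p e] V)

theorem exists_ne_zero_isFixedPt [IsAlgClosed K] [FiniteDimensional K V] [Nontrivial V]
    (he : e ≠ 0) (hψ : Injective ψ) : ∃ v ≠ 0, IsFixedPt ψ v := by
  classical
  obtain ⟨u, hu⟩ := exists_ne (0 : V)
  have hex := exists_mem_span_image_range (R := K) (ψ^[·] u)
  obtain ⟨M, hM⟩ : ∃ M, Nat.find hex = M + 1 := Nat.exists_eq_succ_of_ne_zero fun h => by
    have h0 := Nat.find_spec hex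
    rw [h] at h0
    simp [hu] at h0
  have hmin : ψ^[M] u ∉ span K ((ψ^[·] u) '' ↑(range M)) := Nat.find_min hex (by omega)
  obtain ⟨b, hb⟩ := (mem_span_image_finset_iff_exists_fun' K).1 (hM ▸ Nat.find_spec hex)
  have hq : 2 ≤ p ^ e := Nat.one_lt_pow he (Fact.out : p.Prime).one_lt
  have hqK : ((p ^ e : ℕ) : K) = 0 := by simp [he]
  obtain ⟨t, ht0, ht⟩ := exists_ne_zero_eval_langPoly_eq_self hq hqK
    (coeff_zero_ne_zero_of_iterate_eq_sum ψ hψ hmin hb) M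
  exact ⟨_, sum_range_succ_smul_ne_zero hmin (by rwa [ht]),
    isFixedPt_sum_eval_langPoly_smul_iterate ψ u hb ht⟩

theorem exists_mem_span_fixedPoints_apply_sub_eq [IsAlgClosed K] (he : e ≠ 0) {y : V}
    (hy : y ∈ span K (fixedPoints ψ)) : ∃ z ∈ span K (fixedPoints ψ), ψ z - z = y := by
  suffices ∀ c : K, ∃ z ∈ span K (fixedPoints ψ), ψ z - z = c • y by simpa using this 1
  induction hy using span_induction with
  | mem x hx =>
    intro c
    obtain ⟨d, hd⟩ := exists_pow_sub_self_eq (Nat.one_lt_pow he (Fact.out : p.Prime).one_lt) c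
    refine ⟨d • x, smul_mem _ d (subset_span hx), ?_⟩
    rw [map_smulₛₗ, show ψ x = x from hx, ← sub_smul, iterateFrobenius_def, hd]
  | zero => exact fun c => ⟨0, zero_mem _, by simp⟩
  | add y₁ y₂ _ _ h₁ h₂ =>
    intro c
    obtain ⟨z₁, hz₁, h₁⟩ := h₁ c
    obtain ⟨z₂, hz₂, h₂⟩ := h₂ c
    exact ⟨z₁ + z₂, add_mem hz₁ hz₂, by rw [map_add, smul_add, ← h₁, ← h₂]; abel⟩
  | smul a y _ h =>
    intro c
    simpa only [smul_smul] using h (c * a)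

theorem span_fixedPoints_eq_top [IsAlgClosed K] [FiniteDimensional K V] (he : e ≠ 0)
    (hψ : Injective ψ) : span K (fixedPoints ψ) = ⊤ := by
  set W := span K (fixedPoints ψ)
  have hcomap : W.comap ψ = W := comap_span_fixedPoints hψ
  have hψ' : Injective (W.mapQ W ψ hcomap.ge) := by
    rw [← LinearMap.ker_eq_bot, ker_mapQ, hcomap, mkQ_map_self]
  by_contra hW
  have := Submodule.Quotient.nontrivial_iff.2 hW
  obtain ⟨x, hx0, hx⟩ := exists_ne_zero_isFixedPt _ he hψ'
  obtain ⟨v, rfl⟩ := W.mkQ_surjective x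
  have hv : ψ v - v ∈ W := (Submodule.Quotient.eq W).1 hx
  obtain ⟨z, hzW, hz⟩ := exists_mem_span_fixedPoints_apply_sub_eq ψ he (neg_mem hv)
  have hvz : v + z ∈ W := subset_span (show ψ (v + z) = v + z by
    rw [map_add]; linear_combination (norm := abel) hz)
  exact hx0 ((Submodule.Quotient.mk_eq_zero W).2 (by simpa using sub_mem hvz hzW))

end CharP

end Semilinear

namespace Matrix

variable {K : Type*} [Field K] {n : Type*} [Fintype n]

def langMap (σ : K →+* K) (D : Matrix n n K) : (n → K) →ₛₗ[σ] (n → K) where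
  toFun v := D *ᵥ fun i => σ (v i)
  map_add' v w := by simp only [Pi.add_apply, map_add]; exact mulVec_add ..
  map_smul' c v := by simp only [Pi.smul_apply, smul_eq_mul, map_mul]; exact mulVec_smul D (σ c) _

variable [DecidableEq n]

theorem langMap_injective (σ : K →+* K) {D : Matrix n n K} (hD : IsUnit D.det) :
    Injective (langMap σ D) :=
  (mulVec_injective_iff_isUnit.2 ((isUnit_iff_isUnit_det D).2 hD)).comp σ.injective.comp_left

theorem exists_isUnit_det_forall_col_mem {S : Set (n → K)} (hS : span K S = ⊤) :
    ∃ Y : Matrix n n K, IsUnit Y.det ∧ ∀ j, Y.col j ∈ S := by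
  obtain ⟨b, hbS, hb, hbi⟩ := exists_linearIndependent K S
  let B : Module.Basis b K (n → K) := .mk hbi (by rw [Subtype.range_coe, hb, hS])
  let f : n ≃ b := (Pi.basisFun K n).indexEquiv B
  refine ⟨of fun i j => (f j : n → K) i, ?_, fun j => hbS (f j).2⟩
  rw [← isUnit_iff_isUnit_det, ← linearIndependent_cols_iff_isUnit]
  exact hbi.comp f f.injective

theorem exists_isUnit_det_mul_map_eq_self [IsAlgClosed K] {p e : ℕ} [Fact p.Prime] [CharP K p]
    (he : e ≠ 0) {D : Matrix n n K} (hD : IsUnit D.det) :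
    ∃ Y : Matrix n n K, IsUnit Y.det ∧ D * Y.map (iterateFrobenius K p e) = Y := by
  obtain ⟨Y, hY, hcol⟩ := exists_isUnit_det_forall_col_mem
    (span_fixedPoints_eq_top _ he (langMap_injective (iterateFrobenius K p e) hD))
  exact ⟨Y, hY, ext fun i j => congrFun (hcol j) i⟩

theorem map_inv_eq_inv_mul {σ : K →+* K} {D Y : Matrix n n K} (hY : IsUnit Y.det)
    (h : D * Y.map σ = Y) : Y⁻¹.map σ = Y⁻¹ * D := by
  have : Y * Y⁻¹.map σ = D := calc
    Y * Y⁻¹.map σ = D * (Y * Y⁻¹).map σ := by rw [Matrix.map_mul, ← Matrix.mul_assoc, h]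
    _ = D := by rw [mul_nonsing_inv Y hY, Matrix.map_one _ σ.map_zero σ.map_one, Matrix.mul_one]
  rw [← this, nonsing_inv_mul_cancel_left Y _ hY]

end Matrix

theorem le_one_of_pow_le_self {Γ₀ : Type*} [LinearOrderedCommGroupWithZero Γ₀] {a : Γ₀} {q : ℕ}
    (hq : 2 ≤ q) (h : a ^ q ≤ a) : a ≤ 1 :=
  not_lt.1 fun ha => (lt_self_pow₀ ha hq).not_ge h

theorem Valuation.le_one_of_map_pow_eq_mul {K Γ₀ : Type*} [Field K]
    [LinearOrderedCommGroupWithZero Γ₀] (v : Valuation K Γ₀) {n : Type*} [Fintype n] {q : ℕ}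
    (hq : 2 ≤ q) {C Y : Matrix n n K} (hC : ∀ i j, v (C i j) ≤ 1)
    (hY : Y.map (· ^ q) = C * Y) (i j : n) : v (Y i j) ≤ 1 := by
  obtain ⟨⟨i₀, j₀⟩, -, hmax⟩ :=
    exists_max_image univ (fun ij : n × n => v (Y ij.1 ij.2)) ⟨(i, j), mem_univ _⟩
  have hpow : v (Y i₀ j₀) ^ q ≤ v (Y i₀ j₀) := by
    rw [← map_pow, ← Matrix.map_apply (f := (· ^ q)), hY, Matrix.mul_apply]
    refine v.map_sum_le fun k _ => ?_
    rw [map_mul]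
    exact (mul_le_of_le_one_left' (hC _ _)).trans (hmax (k, j₀) (mem_univ _))
  exact (hmax (i, j) (mem_univ _)).trans (le_one_of_pow_le_self hq hpow)

theorem stmt3_general {K : Type*} [Field K] [IsAlgClosed K]
    (p e : ℕ) [Fact p.Prime] [CharP K p] (he : e ≠ 0) {n : ℕ}
    (D₀ : Matrix (Fin n) (Fin n) K) (hD : IsUnit D₀.det)
    (O : Subring K)
    (hVR : ∀ x : K, x ≠ 0 → x ∈ O ∨ x⁻¹ ∈ O) :
    (∃ Y : Matrix (Fin n) (Fin n) K, IsUnit Y.det ∧ D₀ * Y.map (fun x => x ^ p ^ e) = Y) ∧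
    ((∀ i j, D₀ i j ∈ O) → (∀ i j, D₀⁻¹ i j ∈ O) →
      ∀ Y : Matrix (Fin n) (Fin n) K, IsUnit Y.det → D₀ * Y.map (fun x => x ^ p ^ e) = Y →
        (∀ i j, Y i j ∈ O) ∧ (∀ i j, Y⁻¹ i j ∈ O)) := by
  refine ⟨Matrix.exists_isUnit_det_mul_map_eq_self he hD, fun hDO hDO' Y hY hYeq => ?_⟩
  have hq : 2 ≤ p ^ e := Nat.one_lt_pow he (Fact.out : p.Prime).one_lt
  let V : ValuationSubring K :=
    { O with mem_or_inv_mem' := fun x =>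
        (eq_or_ne x 0).elim (fun h => .inl (h ▸ O.zero_mem)) (hVR x) }
  have hV (x : K) : V.valuation x ≤ 1 ↔ x ∈ O := V.valuation_le_one_iff x
  have hY' : Y.map (· ^ p ^ e) = D₀⁻¹ * Y := by
    rw [← hYeq, D₀.nonsing_inv_mul_cancel_left _ hD, hYeq]
  have hYinv : (Y⁻¹)ᵀ.map (· ^ p ^ e) = D₀ᵀ * (Y⁻¹)ᵀ := by
    rw [Matrix.transpose_map, ← Matrix.transpose_mul]
    exact congrArg _ (Matrix.map_inv_eq_inv_mul (σ := iterateFrobenius K p e) hY hYeq)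
  exact ⟨fun i j => (hV _).1 (V.valuation.le_one_of_map_pow_eq_mul hq
      (fun i j => (hV _).2 (hDO' i j)) hY' i j),
    fun i j => (hV _).1 (V.valuation.le_one_of_map_pow_eq_mul hq
      (fun i j => (hV _).2 (hDO j i)) hYinv j i)⟩

/-- Lang isogeny for `GL_n` plus integrality.  Let `K` be an algebraically closed
field containing `F_q` (`q = p^e`) and `D₀ ∈ GL_n(K)`.  Then there exists `Y₀ ∈ GL_n(K)` with
`D₀·φ_q(Y₀) = Y₀` (entry-wise `q`-th powers).  Moreover, if `O ⊆ K` is a valuation ring that is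
integrally closed in `K` and `D₀ ∈ GL_n(O)`, then every such `Y₀` lies in `GL_n(O)`. -/
theorem stmt3 {K : Type*} [Field K] [IsAlgClosed K]
    (p e : ℕ) [Fact p.Prime] [CharP K p] (he : e ≠ 0) {n : ℕ}
    (D₀ : Matrix (Fin n) (Fin n) K) (hD : IsUnit D₀.det)
    (O : Subring K)
    (hVR : ∀ x : K, x ≠ 0 → x ∈ O ∨ x⁻¹ ∈ O)
    (hIC : ∀ x : K, IsIntegral O x → x ∈ O) :
    (∃ Y : Matrix (Fin n) (Fin n) K, IsUnit Y.det ∧ D₀ * Y.map (fun x => x ^ p ^ e) = Y) ∧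
    ((∀ i j, D₀ i j ∈ O) → (∀ i j, D₀⁻¹ i j ∈ O) →
      ∀ Y : Matrix (Fin n) (Fin n) K, IsUnit Y.det → D₀ * Y.map (fun x => x ^ p ^ e) = Y →
        (∀ i j, Y i j ∈ O) ∧ (∀ i j, Y⁻¹ i j ∈ O)) :=
  stmt3_general p e he D₀ hD O hVR
end

section
/- Let (F, φ) be a difference field with constant field C, and let R be a Picard-Vessiot ring over F for a difference module. Then there is an R-linear isomorphism of difference rings R ⊗_F R ≅ R ⊗_C C_{R⊗_F R}, where the left side carries the difference structure φ⊗φ and the right side φ⊗id, and C_{R⊗_F R} denotes the ring of φ⊗φ-invariant elements of R ⊗_F R. -/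
/-!
The isomorphism is the inverse of the multiplication map `R ⊗_C E → R ⊗_F R`,
`r ⊗ e ↦ (r ⊗ 1) e`.

It is injective because `R` is `φ`-simple with constants `C`: among the `R`-linear relations
between `C`-independent invariants, one of minimal support normalised to have a coefficient `1`
differs from its `φ`-image by a shorter relation, so it is invariant, has coefficients in `C`,
and is therefore trivial.

It is surjective because `R ⊗_F R` is generated over `R ⊗ 1` by its invariants: both `Y ⊗ 1` and
`1 ⊗ Y` are fundamental matrices for `φ ⊗ φ`, so `Z = (Y ⊗ 1)⁻¹ (1 ⊗ Y)` and
`Z' = (1 ⊗ Y)⁻¹ (Y ⊗ 1)` are invariant, and the generators of `1 ⊗ R` are recovered as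
`1 ⊗ Y = (Y ⊗ 1) Z` and `1 ⊗ det(Y)⁻¹ = (det(Y)⁻¹ ⊗ 1) det Z'`.
-/
open scoped TensorProduct

/-- A Picard–Vessiot ring for the difference module with representing matrix `D ∈ GL_n(F)` over
the difference field `(F, φF)`:  `R` is a simple difference ring extension of `F` (via `φR`
extending `φF`), with the same constants as `F`, containing a fundamental solution matrix
`Y ∈ GL_n(R)` with `D·φ(Y) = Y`, and generated over `F` by the entries of `Y` together with
`det(Y)⁻¹`. -/
structure IsPVRing (F : Type*) [Field F] (φF : F →+* F)
    (R : Type*) [CommRing R] [Algebra F R] (φR : R →+* R) {n : ℕ}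
    (D : Matrix (Fin n) (Fin n) F) (Y : Matrix (Fin n) (Fin n) R) : Prop where
  compat : ∀ f : F, φR (algebraMap F R f) = algebraMap F R (φF f)
  simple : ∀ I : Ideal R, (∀ x ∈ I, φR x ∈ I) → I = ⊥ ∨ I = ⊤
  constants : ∀ x : R, φR x = x → ∃ c : F, φF c = c ∧ algebraMap F R c = x
  Dunit : IsUnit D.det
  fund : D.map (algebraMap F R) * Y.map φR = Y
  Yunit : IsUnit Y.det
  gen : Algebra.adjoin F
    ((Set.range fun ij : Fin n × Fin n => Y ij.1 ij.2) ∪ {x | x * Y.det = 1}) = ⊤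

section LinearIndependence

variable {R M ι : Type*} [CommRing R] [AddCommGroup M] [Module R M]

def relationCoeffIdeal (v : ι → M) (s : Finset ι) (j : ι) : Ideal R where
  carrier := {b | ∃ g : ι → R, ∑ i ∈ s, g i • v i = 0 ∧ g j = b}
  zero_mem' := ⟨0, by simp, rfl⟩
  add_mem' := by
    rintro _ _ ⟨g, hg, rfl⟩ ⟨g', hg', rfl⟩
    exact ⟨g + g', by simp [add_smul, Finset.sum_add_distrib, hg, hg'], rfl⟩
  smul_mem' := by
    rintro r _ ⟨g, hg, rfl⟩
    exact ⟨r • g, by simp [mul_smul, ← Finset.smul_sum, hg], rfl⟩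

variable {φ : R →+* R} (ψ : M →ₛₗ[φ] M) {v : ι → M}

theorem map_sum_smul_of_forall_fixed (hv : ∀ i, ψ (v i) = v i) (s : Finset ι) (g : ι → R) :
    ψ (∑ i ∈ s, g i • v i) = ∑ i ∈ s, φ (g i) • v i := by
  simp [hv]

theorem map_mem_relationCoeffIdeal (hv : ∀ i, ψ (v i) = v i) {s : Finset ι} {j : ι} {b : R}
    (hb : b ∈ relationCoeffIdeal v s j) : φ b ∈ relationCoeffIdeal v s j := by
  obtain ⟨g, hg, rfl⟩ := hb
  exact ⟨fun i => φ (g i), by rw [← map_sum_smul_of_forall_fixed ψ hv, hg, map_zero], rfl⟩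

theorem linearIndependent_of_forall_fixed
    (hsimple : ∀ I : Ideal R, (∀ x ∈ I, φ x ∈ I) → I = ⊥ ∨ I = ⊤)
    (hv : ∀ i, ψ (v i) = v i)
    (hconst : ∀ (s : Finset ι) (g : ι → R), (∀ i ∈ s, φ (g i) = g i) →
      ∑ i ∈ s, g i • v i = 0 → ∀ i ∈ s, g i = 0) :
    LinearIndependent R v := by
  classical
  rw [linearIndependent_iff']
  intro s
  induction s using Finset.strongInduction with
  | H s ih =>
    intro g hg j hj
    by_contra hgj
    obtain ⟨k, hk, hkj⟩ : (1 : R) ∈ relationCoeffIdeal v s j := by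
      rcases hsimple _ (fun _ => map_mem_relationCoeffIdeal ψ hv) with hbot | htop
      · exact absurd (hbot ▸ ⟨g, hg, rfl⟩ : g j ∈ (⊥ : Ideal R)) hgj
      · exact htop ▸ Submodule.mem_top
    -- `k - φ ∘ k` is again a relation, and it vanishes at `j` since `k j = 1`
    have hdiff : ∑ i ∈ s.erase j, (k i - φ (k i)) • v i = 0 := by
      rw [Finset.sum_erase _ (by simp [hkj])]
      simp only [sub_smul, Finset.sum_sub_distrib, hk, ← map_sum_smul_of_forall_fixed ψ hv,
        map_zero, sub_zero]
    have hfix : ∀ i ∈ s, φ (k i) = k i := by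
      intro i hi
      by_cases hij : i = j
      · rw [hij, hkj, map_one]
      · exact (sub_eq_zero.mp <| ih _ (Finset.erase_ssubset hj) _ hdiff i
          (Finset.mem_erase.mpr ⟨hij, hi⟩)).symm
    have hone : (1 : R) = 0 := hkj ▸ hconst s k hfix hk j hj
    exact hgj (by simpa using congrArg (· * g j) hone)

theorem injective_liftBaseChange_of_forall_fixed {C E : Type*} [Field C] [Algebra C R] [Module C M]
    [IsScalarTower C R M] [AddCommGroup E] [Module C E]
    (hsimple : ∀ I : Ideal R, (∀ x ∈ I, φ x ∈ I) → I = ⊥ ∨ I = ⊤)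
    (hconst : ∀ r : R, φ r = r → r ∈ (algebraMap C R).range)
    (ι : E →ₗ[C] M) (hι : Function.Injective ι) (hfix : ∀ x, ψ (ι x) = ι x) :
    Function.Injective (ι.liftBaseChange R) := by
  classical
  let β := Module.Basis.ofVectorSpace C E
  refine LinearMap.injective_of_linearIndependent (β.baseChange R).span_eq ?_
  have hcomp : ι.liftBaseChange R ∘ β.baseChange R = ι ∘ β := by ext i; simp
  rw [hcomp]
  refine linearIndependent_of_forall_fixed ψ hsimple (fun i => hfix _) fun s g hg hrel => ?_
  choose! c hc using fun i hi => hconst (g i) (hg i hi)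
  have hrelE : ∑ i ∈ s, c i • β i = 0 := by
    refine hι ?_
    rw [map_sum, map_zero, ← hrel]
    refine Finset.sum_congr rfl fun i hi => ?_
    rw [map_smul, ← hc i hi, algebraMap_smul]; rfl
  intro i hi
  rw [← hc i hi, linearIndependent_iff'.mp β.linearIndependent s c hrelE i hi, map_zero]

end LinearIndependence

section FundamentalMatrix

variable {n S T : Type*} [Fintype n] [CommRing S] [CommRing T]

def IsFundamentalMatrix (ψ : T →+* T) (D Y : Matrix n n T) : Prop :=
  D * Y.map ψ = Y

theorem IsFundamentalMatrix.map {φ : S →+* S} {ψ : T →+* T} {D Y : Matrix n n S}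
    (h : IsFundamentalMatrix φ D Y) (m : S →+* T) (hm : ∀ a, ψ (m a) = m (φ a)) :
    IsFundamentalMatrix ψ (D.map m) (Y.map m) := by
  rw [IsFundamentalMatrix, Matrix.map_map, show ⇑ψ ∘ ⇑m = ⇑m ∘ ⇑φ from funext hm,
    ← Matrix.map_map, ← Matrix.map_mul, h]

theorem IsFundamentalMatrix.map_nonsing_inv_mul [DecidableEq n] {ψ : T →+* T}
    {D Y₁ Y₂ : Matrix n n T} (h₁ : IsFundamentalMatrix ψ D Y₁) (h₂ : IsFundamentalMatrix ψ D Y₂)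
    (hY₁ : IsUnit Y₁.det) : (Y₁⁻¹ * Y₂).map ψ = Y₁⁻¹ * Y₂ := by
  have h : Y₁ * (Y₁⁻¹ * Y₂).map ψ = Y₂ :=
    calc Y₁ * (Y₁⁻¹ * Y₂).map ψ = D * Y₁.map ψ * (Y₁⁻¹ * Y₂).map ψ := by rw [h₁]
      _ = D * (Y₁ * (Y₁⁻¹ * Y₂)).map ψ := by rw [mul_assoc, Matrix.map_mul (L := Y₁)]
      _ = Y₂ := by rw [Matrix.mul_nonsing_inv_cancel_left _ _ hY₁, h₂]
  calc (Y₁⁻¹ * Y₂).map ψ = Y₁⁻¹ * (Y₁ * (Y₁⁻¹ * Y₂).map ψ) :=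
        (Matrix.nonsing_inv_mul_cancel_left _ _ hY₁).symm
    _ = Y₁⁻¹ * Y₂ := by rw [h]

end FundamentalMatrix

namespace IsPVRing

variable {F : Type*} [Field F] {φF : F →+* F} {R : Type*} [CommRing R] [Algebra F R]
  {φR : R →+* R} {n : ℕ} {D : Matrix (Fin n) (Fin n) F} {Y : Matrix (Fin n) (Fin n) R}

theorem isFundamentalMatrix_map (hPV : IsPVRing F φF R φR D Y) {T : Type*} [CommRing T]
    [Algebra F T] {ψ : T →+* T} (m : R →ₐ[F] T) (hm : ∀ a, ψ (m a) = m (φR a)) :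
    IsFundamentalMatrix ψ (D.map (algebraMap F T)) (Y.map m) := by
  have h := IsFundamentalMatrix.map hPV.fund m.toRingHom hm
  rwa [Matrix.map_map, show ⇑m.toRingHom ∘ ⇑(algebraMap F R) = algebraMap F T from
    funext m.commutes] at h

theorem adjoin_fixedPoints_eq_top (hPV : IsPVRing F φF R φR D Y) (ψ : R ⊗[F] R →+* R ⊗[F] R)
    (hψ : ∀ a b : R, ψ (a ⊗ₜ[F] b) = φR a ⊗ₜ[F] φR b) :
    Algebra.adjoin R {x : R ⊗[F] R | ψ x = x} = ⊤ := by
  set A := Algebra.adjoin R {x : R ⊗[F] R | ψ x = x}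
  let l := Algebra.TensorProduct.includeLeft (R := F) (S := F) (A := R) (B := R)
  let r := Algebra.TensorProduct.includeRight (R := F) (A := R) (B := R)
  have hl := hPV.isFundamentalMatrix_map (ψ := ψ) l fun a => by simp [l, hψ]
  have hr := hPV.isFundamentalMatrix_map (ψ := ψ) r fun a => by simp [r, hψ]
  have hmap_det (m : R →ₐ[F] R ⊗[F] R) : (Y.map m).det = m Y.det := (m.map_det Y).symm
  have hYl : IsUnit (Y.map l).det := hmap_det l ▸ hPV.Yunit.map l
  have hYr : IsUnit (Y.map r).det := hmap_det r ▸ hPV.Yunit.map r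
  have hfixed_mem {x : R ⊗[F] R} (hx : ψ x = x) : x ∈ A := Algebra.subset_adjoin hx
  rw [eq_top_iff, ← Algebra.TensorProduct.adjoin_one_tmul_image_eq_top _ hPV.gen,
    Algebra.adjoin_le_iff]
  rintro _ ⟨b, ⟨⟨i, j⟩, rfl⟩ | hb, rfl⟩
  · have hZ := hl.map_nonsing_inv_mul hr hYl
    have : r (Y i j) = ∑ k, Y.map l i k * ((Y.map l)⁻¹ * Y.map r) k j := by
      rw [← Matrix.mul_apply, Matrix.mul_nonsing_inv_cancel_left _ _ hYl, Matrix.map_apply]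
    change r (Y i j) ∈ A
    rw [this]
    refine A.sum_mem fun k _ => A.mul_mem (A.algebraMap_mem (Y i k)) (hfixed_mem ?_)
    exact congrFun (congrFun hZ k) j
  · set Z := (Y.map r)⁻¹ * Y.map l
    have hZ : ψ Z.det = Z.det := by
      rw [RingHom.map_det, RingHom.mapMatrix_apply, hr.map_nonsing_inv_mul hl hYr]
    have hdet : r Y.det * Z.det = l Y.det := by
      rw [← hmap_det, ← hmap_det, ← Matrix.det_mul, Matrix.mul_nonsing_inv_cancel_left _ _ hYr]
    have hl1 : l b * l Y.det = 1 := by rw [← map_mul, hb, map_one]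
    have hr1 : r b * r Y.det = 1 := by rw [← map_mul, hb, map_one]
    have : r b = l b * Z.det := by
      linear_combination (-r b) * hl1 + (l b * Z.det) * hr1 + (-(l b) * r b) * hdet
    change r b ∈ A
    rw [this]
    exact A.mul_mem (A.algebraMap_mem b) (hfixed_mem hZ)

variable {C : Type*} [Field C] [Algebra C F] [Algebra C R] [IsScalarTower C F R]

theorem injective_liftBaseChange (hC : ∀ x : F, φF x = x ↔ x ∈ (algebraMap C F).range)
    (hPV : IsPVRing F φF R φR D Y) (ψ : R ⊗[F] R →+* R ⊗[F] R)
    (hψ : ∀ a b : R, ψ (a ⊗ₜ[F] b) = φR a ⊗ₜ[F] φR b) {E : Type*} [AddCommGroup E] [Module C E]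
    (ι : E →ₗ[C] R ⊗[F] R) (hι : Function.Injective ι) (hfix : ∀ x, ψ (ι x) = ι x) :
    Function.Injective (ι.liftBaseChange R) := by
  let ψₛₗ : R ⊗[F] R →ₛₗ[φR] R ⊗[F] R :=
    { ψ.toAddMonoidHom with
      map_smul' := fun a x => by simp [Algebra.smul_def, hψ] }
  refine injective_liftBaseChange_of_forall_fixed ψₛₗ hPV.simple (fun a ha => ?_) ι hι hfix
  obtain ⟨c, hc, rfl⟩ := hPV.constants a ha
  obtain ⟨d, rfl⟩ := (hC c).mp hc
  exact ⟨d, IsScalarTower.algebraMap_apply C F R d⟩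

theorem bijective_productLeftAlgHom (hC : ∀ x : F, φF x = x ↔ x ∈ (algebraMap C F).range)
    (hPV : IsPVRing F φF R φR D Y) (ψ : R ⊗[F] R →+* R ⊗[F] R)
    (hψ : ∀ a b : R, ψ (a ⊗ₜ[F] b) = φR a ⊗ₜ[F] φR b) {E : Type*} [CommRing E] [Algebra C E]
    (g : E →ₐ[C] R ⊗[F] R) (hg : Function.Injective g) (hfix : ∀ x, ψ (g x) = g x)
    (hrange : ∀ x, ψ x = x → x ∈ g.range) :
    Function.Bijective (Algebra.TensorProduct.productLeftAlgHom (Algebra.ofId R _) g) := by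
  refine ⟨?_, ?_⟩
  · convert hPV.injective_liftBaseChange hC ψ hψ g.toLinearMap hg hfix using 1
    ext x
    induction x using TensorProduct.induction_on with
    | zero => simp
    | tmul a y => simp [Algebra.smul_def]
    | add x y hx hy => rw [map_add, map_add, hx, hy]
  · rw [← AlgHom.range_eq_top, eq_top_iff, ← hPV.adjoin_fixedPoints_eq_top ψ hψ,
      Algebra.adjoin_le_iff]
    rintro x hx
    obtain ⟨y, rfl⟩ := hrange x hx
    exact ⟨1 ⊗ₜ y, by simp [← Algebra.TensorProduct.one_def]⟩

end IsPVRing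

/-- Let `(F, φ)` be a difference field with constant field `C` and `R` a
Picard–Vessiot ring over `F`.  Then there is an `R`-linear isomorphism of difference rings
`R ⊗_F R ≅ R ⊗_C C_{R⊗_F R}`, where the left side carries the difference structure `φ⊗φ`
(the ring endomorphism `ψ`), the right side `φ⊗id` (the ring endomorphism `ψ'`), and
`C_{R⊗_F R}` (here `E`) is the ring of `φ⊗φ`-invariants of `R ⊗_F R`. -/
theorem stmt4 (F : Type*) [Field F] (φF : F →+* F)
    (C : Type*) [Field C] [Algebra C F]
    (hC : ∀ x : F, φF x = x ↔ x ∈ (algebraMap C F).range)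
    (R : Type*) [CommRing R] [Algebra F R] [Algebra C R] [IsScalarTower C F R]
    (φR : R →+* R) {n : ℕ} (D : Matrix (Fin n) (Fin n) F) (Y : Matrix (Fin n) (Fin n) R)
    (hPV : IsPVRing F φF R φR D Y)
    -- the difference structure `φ ⊗ φ` on `R ⊗_F R`
    (ψ : R ⊗[F] R →+* R ⊗[F] R)
    (hψ : ∀ a b : R, ψ (a ⊗ₜ[F] b) = φR a ⊗ₜ[F] φR b)
    -- `E` is the ring of constants of `(R ⊗_F R, φ⊗φ)`, a `C`-algebra
    (E : Type*) [CommRing E] [Algebra C E]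
    (ιE : E →+* R ⊗[F] R) (hinjE : Function.Injective ιE)
    (hErange : ∀ x : R ⊗[F] R, ψ x = x ↔ x ∈ ιE.range)
    (hEalg : ∀ c : C, ιE (algebraMap C E c) = algebraMap F (R ⊗[F] R) (algebraMap C F c)) :
    ∃ (e : (R ⊗[F] R) ≃+* (R ⊗[C] E)) (ψ' : R ⊗[C] E →+* R ⊗[C] E),
      -- `ψ'` is the difference structure `φ ⊗ id` on `R ⊗_C E`
      (∀ (a : R) (x : E), ψ' (a ⊗ₜ[C] x) = φR a ⊗ₜ[C] x) ∧
      -- `e` is `R`-linear (for the left `R`-structures)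
      (∀ (r : R) (x : R ⊗[F] R), e ((r ⊗ₜ[F] (1 : R)) * x) = (r ⊗ₜ[C] (1 : E)) * e x) ∧
      -- `e` is an isomorphism of difference rings
      (∀ x, e (ψ x) = ψ' (e x)) := by
  let g : E →ₐ[C] R ⊗[F] R :=
    { toRingHom := ιE
      commutes' := fun c => (hEalg c).trans (IsScalarTower.algebraMap_apply C F _ c).symm }
  have hbij := hPV.bijective_productLeftAlgHom hC ψ hψ g hinjE (fun x => (hErange _).mpr ⟨x, rfl⟩)
    fun x hx => (hErange x).mp hx
  set μ := AlgEquiv.ofBijective _ hbij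
  let φC : R →ₐ[C] R :=
    { toRingHom := φR
      commutes' := fun c => show φR (algebraMap C R c) = algebraMap C R c by
        rw [IsScalarTower.algebraMap_apply C F R, hPV.compat, (hC _).mpr ⟨c, rfl⟩] }
  let ψ' := Algebra.TensorProduct.map φC (AlgHom.id C E)
  have hμψ (y : R ⊗[C] E) : ψ (μ y) = μ (ψ' y) := by
    induction y using TensorProduct.induction_on with
    | zero => simp
    | tmul a x =>
      have := (hErange (ιE x)).mpr ⟨x, rfl⟩
      simp [μ, ψ', g, φC, hψ, this]
    | add y z hy hz => rw [map_add, map_add, map_add, map_add, hy, hz]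
  refine ⟨μ.symm.toRingEquiv, ψ'.toRingHom, fun a x => rfl, fun r x => ?_, fun x => ?_⟩
  · rw [map_mul]
    exact congrArg (· * _) (μ.symm.commutes r)
  · obtain ⟨y, rfl⟩ := μ.surjective x
    simp [hμψ]
end

section
/- Let k be a field containing F_q with a valuation ring o ⊂ k whose residue field is F_{q^d}, let O be an extension of o to a separable closure of k, and let D ∈ GL_n(o[[t]]) and Y ∈ GL_n(K[[t]]) satisfy D·φ_q(Y) = Y, where K is the completion of an algebraic closure of the completion of k and φ_q acts on coefficients by the q-power Frobenius. Then Y ∈ GL_n(O[[t]]); in particular every entry of every coefficient matrix of Y is separably algebraic over k and integral over O. -/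
/-!
Write `q = p ^ e` and `Y = ∑ Yₗ tˡ`. Comparing coefficients in `D · φ_q(Y) = Y` gives
`Yₗ = ∑_{m ≤ l} Dₘ · φ_q(Y_{l-m})`, and since `D₀` is invertible over `o` this can also be solved
for `φ_q(Yₗ)`. So the finite set `S` of entries of `Y₀, …, Yₗ` satisfies `S^q ⊆ o·S` and
`S ⊆ k·S^q`. The first inclusion makes `k·S` a finite-dimensional space stable under `q`-th powers,
so its elements are algebraic; the second gives `S ⊆ k·S^(q^N)` for every `N`, and for `N` large
all these powers are separable. Over the separable closure, `S^q ⊆ O·S` forces the largest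
valuation `v` of an element of `S` to satisfy `v ^ q ≤ v`, so `S ⊆ O`. Finally
`det Y₀ = det D₀ · (det Y₀)^q` with `det Y₀ ≠ 0` makes `det Y₀` a unit of `O`.
-/

open Submodule

open Polynomial in
theorem IsIntegral.exists_isSeparable_pow_expChar_pow {F K : Type*} [Field F] [Field K]
    [Algebra F K] (p : ℕ) [ExpChar F p] {x : K} (hx : IsIntegral F x) :
    ∃ n, IsSeparable F (x ^ p ^ n) := by
  obtain ⟨g, hg, n, hgx⟩ := (minpoly.irreducible hx).hasSeparableContraction p
  refine ⟨n, hg.of_dvd (minpoly.dvd F _ ?_)⟩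
  simpa only [expand_aeval, minpoly.aeval] using congr_arg (aeval x) hgx

open Polynomial in
theorem Transcendental.linearIndependent_pow {F K : Type*} [Field F] [Field K] [Algebra F K]
    {x : K} (hx : Transcendental F x) : LinearIndependent F (x ^ · : ℕ → K) := by
  have := (basisMonomials F).linearIndependent.map' (Polynomial.aeval x).toLinearMap
    (LinearMap.ker_eq_bot_of_injective (transcendental_iff_injective.mp hx))
  simpa [Function.comp_def] using this

theorem isIntegral_of_forall_pow_pow_mem {F K : Type*} [Field F] [Field K] [Algebra F K]
    {V : Submodule F K} [FiniteDimensional F V] {q : ℕ} (hq : 1 < q) {x : K}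
    (hx : ∀ n, x ^ q ^ n ∈ V) : IsIntegral F x := by
  rw [← isAlgebraic_iff_isIntegral]
  by_contra hx'
  have hind : LinearIndependent F (fun n => x ^ q ^ n) :=
    (Transcendental.linearIndependent_pow hx').comp _ (Nat.pow_right_injective hq)
  exact Module.Finite.not_linearIndependent_of_infinite (R := F)
    (fun n => (⟨x ^ q ^ n, hx n⟩ : V)) (hind.of_comp V.subtype)

theorem Submodule.iterate_mem_span_of_image_subset_span {R M : Type*} [Semiring R]
    [AddCommMonoid M] [Module R M] {σ : R →+* R} (f : M →ₛₗ[σ] M) {s : Set M}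
    (h : f '' s ⊆ span R s) {x : M} (hx : x ∈ span R s) (m : ℕ) : f^[m] x ∈ span R s := by
  induction m with
  | zero => exact hx
  | succ m ih =>
    rw [Function.iterate_succ_apply']
    exact span_le.mpr h (image_span_subset_span f s ⟨_, ih, rfl⟩)

theorem Submodule.subset_span_image_iterate {R M : Type*} [Semiring R] [AddCommMonoid M]
    [Module R M] {σ : R →+* R} (f : M →ₛₗ[σ] M) {s : Set M} (h : s ⊆ span R (f '' s)) (m : ℕ) :
    s ⊆ span R (f^[m] '' s) := by
  induction m with
  | zero => simp [subset_span]
  | succ m ih =>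
    refine h.trans (span_le.mpr ?_)
    rintro _ ⟨x, hx, rfl⟩
    simpa only [Set.image_image, ← Function.iterate_succ_apply'] using
      image_span_subset_span f _ ⟨x, ih hx, rfl⟩

open Filter in
theorem subset_separableClosure_of_subset_span_iterateFrobenius {F K : Type*} [Field F]
    [Field K] [Algebra F K] (p : ℕ) [ExpChar K p] {e : ℕ} (hq : 1 < p ^ e) {s : Set K}
    (hs : s.Finite) (h₁ : iterateFrobenius K p e '' s ⊆ span F s)
    (h₂ : s ⊆ span F (iterateFrobenius K p e '' s)) :
    s ⊆ separableClosure F K := by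
  have : ExpChar F p := (algebraMap F K).expChar (algebraMap F K).injective p
  have : FiniteDimensional F (span F s) := FiniteDimensional.span_of_finite F hs
  let φ := LinearMap.iterateFrobenius F K p e
  have hφ (m : ℕ) (x : K) : φ^[m] x = x ^ (p ^ e) ^ m := congr_fun (pow_iterate _ m) x
  have hsep : ∀ x ∈ s, ∀ᶠ n in atTop, IsSeparable F (x ^ p ^ n) := by
    intro x hx
    have hint : IsIntegral F x := isIntegral_of_forall_pow_pow_mem hq fun m =>
      hφ m x ▸ iterate_mem_span_of_image_subset_span φ h₁ (subset_span hx) m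
    obtain ⟨n, hn⟩ := hint.exists_isSeparable_pow_expChar_pow p
    filter_upwards [eventually_ge_atTop n] with m hm
    rw [← Nat.sub_add_cancel hm, pow_add, pow_mul']
    exact mem_separableClosure_iff.mp (pow_mem (mem_separableClosure_iff.mpr hn) _)
  obtain ⟨N, hN⟩ := eventually_atTop.mp ((eventually_all_finite hs).mpr hsep)
  have he : 0 < e := Nat.pos_of_ne_zero (by rintro rfl; simp at hq)
  intro x hx
  refine (span_le (p := (separableClosure F K).toSubalgebra.toSubmodule)).mpr ?_
    (subset_span_image_iterate φ h₂ N hx)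
  rintro _ ⟨y, hy, rfl⟩
  rw [hφ, ← pow_mul]
  exact mem_separableClosure_iff.mpr (hN _ (Nat.le_mul_of_pos_left N he) y hy)

theorem ValuationSubring.subset_of_pow_mem_span {L : Type*} [Field L] (O : ValuationSubring L)
    {q : ℕ} (hq : 1 < q) {s : Set L} (hs : s.Finite) (h : ∀ x ∈ s, x ^ q ∈ span O s) :
    s ⊆ O := by
  rcases s.eq_empty_or_nonempty with rfl | hne
  · exact Set.empty_subset _
  obtain ⟨x₀, hx₀, hmax⟩ := s.exists_max_image O.valuation hs hne
  have hspan : ∀ y ∈ span O s, O.valuation y ≤ O.valuation x₀ := by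
    intro y hy
    induction hy using span_induction with
    | mem y hy => exact hmax y hy
    | zero => simp
    | add a b _ _ ha hb => exact O.valuation.map_add_le ha hb
    | smul c y _ hy =>
      rw [Algebra.smul_def, map_mul]
      exact mul_le_of_le_one_of_le (O.valuation_le_one c) hy
  have hle_one : O.valuation x₀ ≤ 1 := by
    by_contra! hgt
    have := hspan _ (h x₀ hx₀)
    rw [map_pow] at this
    exact (lt_self_pow₀ hgt hq).not_ge this
  exact fun x hx => O.mem_of_valuation_le_one x ((hmax x hx).trans hle_one)

theorem isUnit_of_mul_pow_eq_self {R : Type*} [CommRing R] [IsDomain R] {a x : R} {q : ℕ}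
    (hq : 1 < q) (hx : x ≠ 0) (h : a * x ^ q = x) : IsUnit x := by
  obtain ⟨r, rfl⟩ : ∃ r, q = r + 2 := ⟨q - 2, by omega⟩
  refine IsUnit.of_mul_eq_one (a * x ^ r) (mul_left_cancel₀ hx ?_)
  calc x * (x * (a * x ^ r)) = a * x ^ (r + 2) := by ring
    _ = x * 1 := by rw [h, mul_one]

open PowerSeries Finset

namespace Matrix

theorem mem_of_forall_mulVec_map_mem {R S n : Type*} [CommRing R] [CommRing S] [Algebra R S]
    [Fintype n] [DecidableEq n] {M : Matrix n n R} (hM : IsUnit M.det) {P : Submodule R S}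
    {v : n → S} (h : ∀ i, (M.map (algebraMap R S) *ᵥ v) i ∈ P) (r : n) : v r ∈ P := by
  have hv : v = M⁻¹.map (algebraMap R S) *ᵥ (M.map (algebraMap R S) *ᵥ v) := by
    rw [mulVec_mulVec, ← Matrix.map_mul, nonsing_inv_mul _ hM,
      Matrix.map_one _ (map_zero _) (map_one _), one_mulVec]
  rw [hv]
  exact sum_mem fun i _ => by
    simpa only [map_apply, Algebra.smul_def] using P.smul_mem (M⁻¹ r i) (h i)

section PowerSeriesCoeffs

variable {A B m n : Type*} [Semiring A] [Semiring B]

def coeffsUpTo (Y : Matrix m n A⟦X⟧) (l : ℕ) : Set A :=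
  {a | ∃ k ≤ l, ∃ i j, coeff k (Y i j) = a}

theorem coeff_mem_coeffsUpTo (Y : Matrix m n A⟦X⟧) {k l : ℕ} (hkl : k ≤ l) (i : m) (j : n) :
    coeff k (Y i j) ∈ Y.coeffsUpTo l :=
  ⟨k, hkl, i, j, rfl⟩

theorem coeffsUpTo_mono (Y : Matrix m n A⟦X⟧) : Monotone Y.coeffsUpTo := by
  rintro k l hkl _ ⟨k', hk', i, j, rfl⟩
  exact Y.coeff_mem_coeffsUpTo (hk'.trans hkl) i j

theorem finite_coeffsUpTo [Finite m] [Finite n] (Y : Matrix m n A⟦X⟧) (l : ℕ) :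
    (Y.coeffsUpTo l).Finite := by
  refine (Set.finite_range fun t : Fin (l + 1) × m × n => coeff t.1 (Y t.2.1 t.2.2)).subset ?_
  rintro _ ⟨k, hk, i, j, rfl⟩
  exact ⟨(⟨k, Nat.lt_succ_of_le hk⟩, i, j), rfl⟩

theorem exists_map_map_eq_of_coeff_mem_range (g : B →+* A) {Y : Matrix m n A⟦X⟧}
    (h : ∀ l i j, coeff l (Y i j) ∈ Set.range g) :
    ∃ Y' : Matrix m n B⟦X⟧, Y'.map (PowerSeries.map g) = Y := by
  choose y hy using h
  exact ⟨of fun i j => mk fun l => y l i j, by ext i j l; simp [coeff_map, hy]⟩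

end PowerSeriesCoeffs

theorem det_map_map_constantCoeff {A B n : Type*} [CommRing A] [CommRing B] [Fintype n]
    [DecidableEq n] (g : A →+* B) (Y : Matrix n n A⟦X⟧) :
    ((Y.map (PowerSeries.map g)).map constantCoeff).det = g (Y.map constantCoeff).det := by
  rw [RingHom.map_det]
  congr 1

section FrobeniusEquation

variable {R S n : Type*} [CommRing R] [CommRing S] [Algebra R S] [Fintype n]
  {f : S →+* S} {D : Matrix n n R⟦X⟧} {Y : Matrix n n S⟦X⟧}

theorem coeff_eq_sum_of_mul_map_eq
    (h : D.map (PowerSeries.map (algebraMap R S)) * Y.map (PowerSeries.map f) = Y)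
    (l : ℕ) (i j : n) :
    coeff l (Y i j) =
      ∑ x ∈ antidiagonal l, ∑ r, algebraMap R S (coeff x.1 (D i r)) * f (coeff x.2 (Y r j)) := by
  conv_lhs => rw [← h]
  simp only [mul_apply, map_sum, coeff_mul, map_apply, coeff_map]
  exact Finset.sum_comm

theorem coeffsUpTo_subset_span_image
    (h : D.map (PowerSeries.map (algebraMap R S)) * Y.map (PowerSeries.map f) = Y) (l : ℕ) :
    Y.coeffsUpTo l ⊆ span R (f '' Y.coeffsUpTo l) := by
  rintro _ ⟨k, hk, i, j, rfl⟩
  rw [coeff_eq_sum_of_mul_map_eq h]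
  refine sum_mem fun x hx => sum_mem fun r _ => ?_
  rw [← Algebra.smul_def]
  refine smul_mem _ _ (subset_span ⟨_, Y.coeff_mem_coeffsUpTo ?_ r j, rfl⟩)
  exact (HasAntidiagonal.antidiagonal.snd_le hx).trans hk

theorem map_coeff_mem_span_coeffsUpTo [DecidableEq n]
    (h : D.map (PowerSeries.map (algebraMap R S)) * Y.map (PowerSeries.map f) = Y)
    (hD : IsUnit (D.map constantCoeff).det) (l : ℕ) (i j : n) :
    f (coeff l (Y i j)) ∈ span R (Y.coeffsUpTo l) := by
  induction l using Nat.strong_induction_on generalizing i with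
  | _ l ih =>
  refine mem_of_forall_mulVec_map_mem hD (v := fun r => f (coeff l (Y r j))) (fun i => ?_) i
  have hsplit := coeff_eq_sum_of_mul_map_eq h l i j
  rw [← add_sum_erase _ _ (a := (0, l)) (by simp)] at hsplit
  have hmulVec : ((D.map constantCoeff).map (algebraMap R S) *ᵥ fun r => f (coeff l (Y r j))) i =
      coeff l (Y i j) - ∑ x ∈ (antidiagonal l).erase (0, l),
        ∑ r, algebraMap R S (coeff x.1 (D i r)) * f (coeff x.2 (Y r j)) := by
    rw [hsplit, add_sub_cancel_right]
    simp only [mulVec, dotProduct, map_apply, coeff_zero_eq_constantCoeff_apply]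
  rw [hmulVec]
  refine sub_mem (subset_span (Y.coeff_mem_coeffsUpTo le_rfl i j))
    (sum_mem fun x hx => sum_mem fun r _ => ?_)
  obtain ⟨hx0, hx⟩ := mem_erase.mp hx
  have hxl : x.2 < l := by
    rw [HasAntidiagonal.mem_antidiagonal] at hx
    by_contra! hle
    exact hx0 (Prod.ext (by simp; omega) (by simp; omega))
  rw [← Algebra.smul_def]
  exact smul_mem _ _ (span_mono (Y.coeffsUpTo_mono hxl.le) (ih _ hxl r))

theorem image_coeffsUpTo_subset_span [DecidableEq n]
    (h : D.map (PowerSeries.map (algebraMap R S)) * Y.map (PowerSeries.map f) = Y)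
    (hD : IsUnit (D.map constantCoeff).det) (l : ℕ) :
    f '' Y.coeffsUpTo l ⊆ span R (Y.coeffsUpTo l) := by
  rintro _ ⟨_, ⟨k, hk, i, j, rfl⟩, rfl⟩
  exact span_mono (Y.coeffsUpTo_mono hk) (map_coeff_mem_span_coeffsUpTo h hD k i j)

theorem algebraMap_det_mul_det_eq [DecidableEq n]
    (h : D.map (PowerSeries.map (algebraMap R S)) * Y.map (PowerSeries.map f) = Y) :
    algebraMap R S (D.map constantCoeff).det * f (Y.map constantCoeff).det =
      (Y.map constantCoeff).det := by
  rw [RingHom.map_det, RingHom.map_det, ← det_mul]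
  congr 1
  ext i j
  simp only [RingHom.mapMatrix_apply, map_apply, mul_apply, ← coeff_zero_eq_constantCoeff_apply]
  rw [coeff_eq_sum_of_mul_map_eq h 0 i j, Nat.antidiagonal_zero, sum_singleton]

end FrobeniusEquation

theorem mul_map_eq_of_map_injective {R S T n : Type*} [CommRing R] [CommRing S] [CommRing T]
    [Algebra R S] [Algebra R T] [Algebra S T] [IsScalarTower R S T] [Fintype n]
    {fS : S →+* S} {fT : T →+* T} (hinj : Function.Injective (algebraMap S T))
    (hcomm : (algebraMap S T).comp fS = fT.comp (algebraMap S T))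
    {D : Matrix n n R⟦X⟧} {Y : Matrix n n S⟦X⟧}
    (h : D.map (PowerSeries.map (algebraMap R T)) *
        (Y.map (PowerSeries.map (algebraMap S T))).map (PowerSeries.map fT) =
      Y.map (PowerSeries.map (algebraMap S T))) :
    D.map (PowerSeries.map (algebraMap R S)) * Y.map (PowerSeries.map fS) = Y := by
  have hD : (PowerSeries.map (algebraMap S T)).comp (PowerSeries.map (algebraMap R S)) =
      PowerSeries.map (algebraMap R T) := by
    rw [← PowerSeries.map_comp, ← IsScalarTower.algebraMap_eq]
  have hY : (PowerSeries.map (algebraMap S T)).comp (PowerSeries.map fS) =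
      (PowerSeries.map fT).comp (PowerSeries.map (algebraMap S T)) := by
    rw [← PowerSeries.map_comp, ← PowerSeries.map_comp, hcomm]
  refine map_injective (PowerSeries.map_injective _ hinj) ?_
  dsimp only
  rwa [Matrix.map_mul, Matrix.map_map, Matrix.map_map, ← RingHom.coe_comp, ← RingHom.coe_comp,
    hD, hY, RingHom.coe_comp, ← Matrix.map_map]

theorem exists_map_eq_of_mul_map_iterateFrobenius_eq_separableClosure {k K n : Type*}
    [Field k] [Field K] [Algebra k K] (p : ℕ) [ExpChar K p] {e : ℕ} (hq : 1 < p ^ e)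
    [Fintype n] [DecidableEq n] {D : Matrix n n k⟦X⟧} (hD : IsUnit (D.map constantCoeff).det)
    {Y : Matrix n n K⟦X⟧}
    (h : D.map (PowerSeries.map (algebraMap k K)) *
      Y.map (PowerSeries.map (iterateFrobenius K p e)) = Y) :
    ∃ Y' : Matrix n n (separableClosure k K)⟦X⟧,
      Y'.map (PowerSeries.map (algebraMap (separableClosure k K) K)) = Y := by
  have hsep (l : ℕ) : Y.coeffsUpTo l ⊆ separableClosure k K :=
    subset_separableClosure_of_subset_span_iterateFrobenius p hq (Y.finite_coeffsUpTo l)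
      (image_coeffsUpTo_subset_span h hD l) (coeffsUpTo_subset_span_image h l)
  exact exists_map_map_eq_of_coeff_mem_range _ fun l i j =>
    ⟨⟨coeff l (Y i j), hsep l (Y.coeff_mem_coeffsUpTo le_rfl i j)⟩, rfl⟩

theorem exists_map_eq_and_isUnit_det_of_mul_map_iterateFrobenius_eq {L n : Type*} [Field L]
    (p : ℕ) [ExpChar L p] {e : ℕ} (hq : 1 < p ^ e) (O : ValuationSubring L) [Fintype n]
    [DecidableEq n] {D : Matrix n n O⟦X⟧} (hD : IsUnit (D.map constantCoeff).det)
    {Y : Matrix n n L⟦X⟧} (hY : (Y.map constantCoeff).det ≠ 0)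
    (h : D.map (PowerSeries.map (algebraMap O L)) *
      Y.map (PowerSeries.map (iterateFrobenius L p e)) = Y) :
    ∃ Y' : Matrix n n O⟦X⟧, Y'.map (PowerSeries.map (algebraMap O L)) = Y ∧
      IsUnit (Y'.map constantCoeff).det := by
  have hint (l : ℕ) : Y.coeffsUpTo l ⊆ O :=
    O.subset_of_pow_mem_span hq (Y.finite_coeffsUpTo l) fun x hx =>
      image_coeffsUpTo_subset_span h hD l ⟨x, hx, rfl⟩
  obtain ⟨Y', rfl⟩ := exists_map_map_eq_of_coeff_mem_range (algebraMap O L) fun l i j =>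
    ⟨⟨coeff l (Y i j), hint l (Y.coeff_mem_coeffsUpTo le_rfl i j)⟩, rfl⟩
  refine ⟨Y', rfl, ?_⟩
  have hdet := algebraMap_det_mul_det_eq h
  rw [det_map_map_constantCoeff, iterateFrobenius_def, ← map_pow, ← map_mul] at hdet
  rw [det_map_map_constantCoeff] at hY
  exact isUnit_of_mul_pow_eq_self hq (by rintro h0; simp [h0] at hY) (Subtype.ext hdet)

theorem exists_map_eq_and_isUnit_det_of_coeff_mem {k L n : Type*} [Field k] [Field L]
    [Algebra k L] [Fintype n] [DecidableEq n] {o : ValuationSubring k} {O : ValuationSubring L}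
    (hoO : ∀ x, x ∈ o → algebraMap k L x ∈ O) {D : Matrix n n k⟦X⟧}
    (hDo : ∀ l i j, coeff l (D i j) ∈ o) (u : oˣ)
    (hu : ((u : o) : k) = (D.map constantCoeff).det) :
    ∃ D' : Matrix n n O⟦X⟧, D'.map (PowerSeries.map (algebraMap O L)) =
      D.map (PowerSeries.map (algebraMap k L)) ∧ IsUnit (D'.map constantCoeff).det := by
  obtain ⟨D', hD'⟩ := exists_map_map_eq_of_coeff_mem_range (algebraMap O L)
    (Y := D.map (PowerSeries.map (algebraMap k L)))
    fun l i j => ⟨⟨algebraMap k L (coeff l (D i j)), hoO _ (hDo l i j)⟩, by simp⟩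
  let ψ : o →+* O := (algebraMap k L).restrict o O hoO
  have hψ : (D'.map constantCoeff).det = ψ u := Subtype.ext <| by
    rw [← ValuationSubring.algebraMap_apply, ← det_map_map_constantCoeff, hD',
      det_map_map_constantCoeff, ← hu]
    rfl
  exact ⟨D', hD', hψ ▸ u.isUnit.map ψ⟩

end Matrix

theorem stmt10_general (p e : ℕ) [Fact p.Prime] (he : e ≠ 0)
    {k : Type*} [Field k]
    {K : Type*} [Field K] [Algebra k K] [ExpChar K p]
    (o : ValuationSubring k)
    (O : ValuationSubring (separableClosure k K))
    (hO : ∀ x : k, x ∈ o ↔ algebraMap k (separableClosure k K) x ∈ O)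
    {n : ℕ} (D : Matrix (Fin n) (Fin n) (PowerSeries k))
    (hDo : ∀ l i j, PowerSeries.coeff (R := k) l (D i j) ∈ o)
    (hDdet : ∃ u : oˣ, ((u : o) : k) = (D.map (PowerSeries.constantCoeff (R := k))).det)
    (Y : Matrix (Fin n) (Fin n) (PowerSeries K)) (hY : IsUnit Y.det)
    (hfund : D.map (PowerSeries.map (algebraMap k K)) *
        Y.map (PowerSeries.map (iterateFrobenius K p e)) = Y) :
    (∀ l i j, ∃ y : O, algebraMap (separableClosure k K) K (y : separableClosure k K) =
      PowerSeries.coeff (R := K) l (Y i j)) ∧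
    ∃ u : Oˣ, algebraMap (separableClosure k K) K ((u : O) : separableClosure k K) =
      (Y.map (PowerSeries.constantCoeff (R := K))).det := by
  have hq : 1 < p ^ e := Nat.one_lt_pow he (Fact.out : p.Prime).one_lt
  obtain ⟨u, hu⟩ := hDdet
  obtain ⟨Y', rfl⟩ := Matrix.exists_map_eq_of_mul_map_iterateFrobenius_eq_separableClosure p hq
    (hu ▸ u.isUnit.map (algebraMap o k)) hfund
  obtain ⟨D', hD', hD'unit⟩ :=
    Matrix.exists_map_eq_and_isUnit_det_of_coeff_mem (fun x => (hO x).mp) hDo u hu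
  have hfund' := Matrix.mul_map_eq_of_map_injective (algebraMap (separableClosure k K) K).injective
    ((algebraMap _ K).iterateFrobenius_comm p e) hfund
  rw [← hD'] at hfund'
  have hY0 : (Y'.map constantCoeff).det ≠ 0 := by
    have := (isUnit_constantCoeff _ hY).ne_zero
    rwa [RingHom.map_det, RingHom.mapMatrix_apply, Matrix.det_map_map_constantCoeff,
      map_ne_zero_iff _ (algebraMap (separableClosure k K) K).injective] at this
  obtain ⟨Y'', rfl, hunit⟩ :=
    Matrix.exists_map_eq_and_isUnit_det_of_mul_map_iterateFrobenius_eq p hq O hD'unit hY0 hfund'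
  refine ⟨fun l i j => ⟨coeff l (Y'' i j), by simp [coeff_map]⟩, hunit.unit, ?_⟩
  rw [Matrix.det_map_map_constantCoeff, Matrix.det_map_map_constantCoeff]
  rfl

/-- Let `k` be a field containing `F_q` with a valuation ring `o ⊆ k` whose residue
field is `F_{q^d}`, let `O` be an extension of `o` to a separable closure of `k` (realized as the
separable closure of `k` inside an algebraically closed extension `K`), and let
`D ∈ GL_n(o[[t]])` and `Y ∈ GL_n(K[[t]])` satisfy `D·φ_q(Y) = Y`, where `φ_q` acts on
coefficients by the `q`-power Frobenius.  Then `Y ∈ GL_n(O[[t]])`; in particular every entry of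
every coefficient matrix of `Y` is separably algebraic over `k` and integral over `O`. -/
theorem stmt10 (p e d : ℕ) [Fact p.Prime] (he : e ≠ 0) (hd : d ≠ 0)
    {k : Type*} [Field k] [CharP k p] (ι : GaloisField p e →+* k)
    {K : Type*} [Field K] [Algebra k K] [IsAlgClosed K] [ExpChar K p]
    (o : ValuationSubring k)
    (hres : Nat.card (IsLocalRing.ResidueField o) = (p ^ e) ^ d)
    (O : ValuationSubring (separableClosure k K))
    (hO : ∀ x : k, x ∈ o ↔ algebraMap k (separableClosure k K) x ∈ O)
    {n : ℕ} (D : Matrix (Fin n) (Fin n) (PowerSeries k))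
    (hDo : ∀ l i j, PowerSeries.coeff (R := k) l (D i j) ∈ o)
    (hDdet : ∃ u : oˣ, ((u : o) : k) = (D.map (PowerSeries.constantCoeff (R := k))).det)
    (Y : Matrix (Fin n) (Fin n) (PowerSeries K)) (hY : IsUnit Y.det)
    (hfund : D.map (PowerSeries.map (algebraMap k K)) *
        Y.map (PowerSeries.map (iterateFrobenius K p e)) = Y) :
    (∀ l i j, ∃ y : O, algebraMap (separableClosure k K) K (y : separableClosure k K) =
      PowerSeries.coeff (R := K) l (Y i j)) ∧
    ∃ u : Oˣ, algebraMap (separableClosure k K) K ((u : O) : separableClosure k K) =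
      (Y.map (PowerSeries.constantCoeff (R := K))).det :=
  stmt10_general p e he o O hO D hDo hDdet Y hY hfund
end

section
/- Let K₁ be an infinite field and G ≤ GL_n a connected linear algebraic group over K₁ such that K₁ is perfect or G is reductive. Let K₂/K₁ be a field extension and H ⊆ G a closed subvariety defined over K₂((t)). If for every g ∈ G(K₁) there exists h ∈ H(K₂[[t]]) of the form h = g + M₁t + M₂t² + … with M_i ∈ M_n(K₂), then H = G. -/
noncomputable section

/-- The algebraic closure of the Laurent series field `K₂((t))`. -/
abbrev Kt (K₂ : Type*) [Field K₂] := AlgebraicClosure (LaurentSeries K₂)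

/-- The canonical embedding `K₂[[t]] → overline{K₂((t))}`. -/
noncomputable def psToKt (K₂ : Type*) [Field K₂] : PowerSeries K₂ →+* Kt K₂ :=
  (algebraMap (LaurentSeries K₂) (Kt K₂)).comp (HahnSeries.ofPowerSeries ℤ K₂)

/-- The canonical embedding `K₂ → overline{K₂((t))}`. -/
noncomputable def k2ToKt (K₂ : Type*) [Field K₂] : K₂ →+* Kt K₂ :=
  (psToKt K₂).comp (PowerSeries.C (R := K₂))

/-!
Clearing denominators, write `c • f = P` with `c ∈ K₂[[t]]` nonzero and `P` a polynomial over
`K₂[[t]]`; then `P` vanishes at every `K₂[[t]]`-point `h` of `H`. Writing `P = P₀ + t P₁` with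
`P₀` over `K₂`, `P₀` vanishes at the constant terms of these points, hence on `G(K₁)`, hence on
`G` by density; so `P₀(h) = 0` and therefore `P₁(h) = 0`, and we can continue with `P₁`. Thus
every `t`-adic coefficient polynomial `Pₙ` of `P` vanishes on `G`. These `Pₙ` lie in a
finite-dimensional `K₂`-space, so `P` is a `K₂[[t]]`-combination of finitely many polynomials
over `K₂` vanishing on `G`, and `P`, hence `f`, vanishes on `G`.
-/

open MvPolynomial
open scoped PowerSeries

namespace PowerSeries

variable {R : Type*} [Semiring R]

def tail : R⟦X⟧ →+ R⟦X⟧ where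
  toFun φ := mk fun n => coeff (n + 1) φ
  map_zero' := by ext; simp
  map_add' _ _ := by ext; simp

@[simp]
theorem coeff_tail (φ : R⟦X⟧) (n : ℕ) : coeff n (tail φ) = coeff (n + 1) φ := by
  simp [tail]

theorem X_mul_tail_add_C_constantCoeff (φ : R⟦X⟧) : X * tail φ + C (constantCoeff φ) = φ :=
  (eq_X_mul_shift_add_const φ).symm

theorem constantCoeff_tail_iterate (n : ℕ) (φ : R⟦X⟧) : constantCoeff (tail^[n] φ) = coeff n φ := by
  induction n generalizing φ with
  | zero => simp
  | succ n ih => rw [Function.iterate_succ_apply, ih, coeff_tail]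

end PowerSeries

namespace MvPolynomial

variable {σ : Type*}

theorem exists_map_eq_C_mul_of_isLocalization {R S : Type*} [CommSemiring R] [CommSemiring S]
    [Algebra R S] (M : Submonoid R) [IsLocalization M S] (p : MvPolynomial σ S) :
    ∃ (b : M) (q : MvPolynomial σ R), q.map (algebraMap R S) = C (algebraMap R S b) * p := by
  obtain ⟨b, hb⟩ := IsLocalization.exist_integer_multiples_of_finset M p.coeffs
  refine ⟨b, mem_range_map_iff_coeffs_subset.2 fun c hc => ?_⟩
  obtain ⟨β, -, rfl⟩ := mem_coeffs_iff.1 hc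
  rw [coeff_C_mul]
  by_cases h : p.coeff β = 0
  · exact ⟨0, by simp [h]⟩
  · obtain ⟨r, hr⟩ := hb _ (coeff_mem_coeffs β h)
    exact ⟨r, by rw [hr, Algebra.smul_def]⟩

section CommSemiring

variable {R : Type*} [CommSemiring R]

def powerSeriesCoeff (n : ℕ) (p : MvPolynomial σ R⟦X⟧) : MvPolynomial σ R :=
  AddMonoidAlgebra.map (PowerSeries.coeff n).toAddMonoidHom p

def powerSeriesTail (p : MvPolynomial σ R⟦X⟧) : MvPolynomial σ R⟦X⟧ :=
  AddMonoidAlgebra.map PowerSeries.tail p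

@[simp]
theorem coeff_powerSeriesCoeff (n : ℕ) (p : MvPolynomial σ R⟦X⟧) (β : σ →₀ ℕ) :
    coeff β (p.powerSeriesCoeff n) = PowerSeries.coeff n (coeff β p) :=
  rfl

@[simp]
theorem coeff_powerSeriesTail (p : MvPolynomial σ R⟦X⟧) (β : σ →₀ ℕ) :
    coeff β p.powerSeriesTail = PowerSeries.tail (coeff β p) :=
  rfl

theorem map_C_map_constantCoeff_add_C_X_mul_powerSeriesTail (p : MvPolynomial σ R⟦X⟧) :
    (p.map PowerSeries.constantCoeff).map PowerSeries.C + C PowerSeries.X * p.powerSeriesTail =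
      p := by
  ext β : 1
  rw [coeff_add, coeff_map, coeff_map, coeff_C_mul, coeff_powerSeriesTail, add_comm,
    PowerSeries.X_mul_tail_add_C_constantCoeff]

theorem map_constantCoeff_powerSeriesTail_iterate (n : ℕ) (p : MvPolynomial σ R⟦X⟧) :
    (powerSeriesTail^[n] p).map PowerSeries.constantCoeff = p.powerSeriesCoeff n := by
  ext β : 1
  have hβ : Function.Semiconj (coeff β) (powerSeriesTail (σ := σ) (R := R)) PowerSeries.tail :=
    fun q => coeff_powerSeriesTail q β
  rw [coeff_map, hβ.iterate_right n p, PowerSeries.constantCoeff_tail_iterate,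
    coeff_powerSeriesCoeff]

theorem powerSeriesCoeff_mem_of_forall_eval_eq_zero {S : Set (σ → R⟦X⟧)}
    {W : Set (MvPolynomial σ R)}
    (hW : ∀ w, (∀ s ∈ S, eval (PowerSeries.constantCoeff ∘ s) w = 0) → w ∈ W)
    (hWS : ∀ w ∈ W, ∀ s ∈ S, eval s (w.map PowerSeries.C) = 0)
    {p : MvPolynomial σ R⟦X⟧} (hp : ∀ s ∈ S, eval s p = 0) (n : ℕ) :
    p.powerSeriesCoeff n ∈ W := by
  have hconst (q : MvPolynomial σ R⟦X⟧) (hq : ∀ s ∈ S, eval s q = 0) :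
      q.map PowerSeries.constantCoeff ∈ W :=
    hW _ fun s hs => by rw [eval_map, ← eval₂_comp, hq s hs, map_zero]
  have htail (q : MvPolynomial σ R⟦X⟧) (hq : ∀ s ∈ S, eval s q = 0) :
      ∀ s ∈ S, eval s q.powerSeriesTail = 0 := by
    intro s hs
    have h := congrArg (eval s) (map_C_map_constantCoeff_add_C_X_mul_powerSeriesTail q)
    rw [map_add, map_mul, eval_C, hWS _ (hconst q hq) s hs, zero_add, hq s hs] at h
    exact PowerSeries.X_mul_cancel (h.trans (mul_zero _).symm)
  have hiter : ∀ k, ∀ s ∈ S, eval s (powerSeriesTail^[k] p) = 0 := by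
    intro k
    induction k with
    | zero => exact hp
    | succ k ih => rw [Function.iterate_succ']; exact htail _ ih
  rw [← map_constantCoeff_powerSeriesTail_iterate]
  exact hconst _ (hiter n)

end CommSemiring

section Field

variable {K : Type*} [Field K]

theorem support_powerSeriesCoeff_subset (n : ℕ) (p : MvPolynomial σ K⟦X⟧) :
    (p.powerSeriesCoeff n).support ⊆ p.support := fun β hβ => by
  rw [mem_support_iff] at hβ ⊢
  exact fun h => hβ (by rw [coeff_powerSeriesCoeff, h, map_zero])

theorem mem_span_map_C_of_powerSeriesCoeff_mem {p : MvPolynomial σ K⟦X⟧}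
    {W : Submodule K (MvPolynomial σ K)} (h : ∀ n, p.powerSeriesCoeff n ∈ W) :
    p ∈ Ideal.span (map PowerSeries.C '' W) := by
  classical
  let V := W ⊓ restrictSupport K p.support
  have hV (n : ℕ) : p.powerSeriesCoeff n ∈ V := ⟨h n, support_powerSeriesCoeff_subset n p⟩
  have : Module.Finite K (restrictSupport K (p.support : Set (σ →₀ ℕ))) :=
    Module.Finite.of_basis (basisRestrictSupport K _)
  have : Module.Finite K V := Submodule.finiteDimensional_of_le inf_le_right
  let b := Module.finBasis K V
  let u (k : Fin (Module.finrank K V)) : K⟦X⟧ := PowerSeries.mk fun n => b.repr ⟨_, hV n⟩ k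
  have hp : p = ∑ k, C (u k) * (b k : MvPolynomial σ K).map PowerSeries.C := by
    ext β n
    have hn := congrArg (fun v : V => coeff β (v : MvPolynomial σ K)) (b.sum_repr ⟨_, hV n⟩)
    simp only [Submodule.coe_sum, Submodule.coe_smul, coeff_sum, coeff_smul, smul_eq_mul,
      coeff_powerSeriesCoeff] at hn
    simp [coeff_sum, coeff_C_mul, coeff_map, u, ← hn]
  rw [hp]
  exact Ideal.sum_mem _ fun k _ =>
    Ideal.mul_mem_left _ _ (Ideal.subset_span ⟨_, (b k).2.1, rfl⟩)

theorem eval₂_eq_zero_of_forall_powerSeriesCoeff {L : Type*} [CommSemiring L] (φ : K⟦X⟧ →+* L)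
    (x : σ → L) {p : MvPolynomial σ K⟦X⟧}
    (h : ∀ n, eval₂ (φ.comp PowerSeries.C) x (p.powerSeriesCoeff n) = 0) :
    eval₂ φ x p = 0 := by
  let W := (RingHom.ker (eval₂Hom (φ.comp PowerSeries.C) x)).restrictScalars K
  have hspan : Ideal.span (map PowerSeries.C '' W) ≤ RingHom.ker (eval₂Hom φ x) := by
    rw [Ideal.span_le]
    rintro _ ⟨w, hw, rfl⟩
    rw [SetLike.mem_coe, RingHom.mem_ker, eval₂Hom_map_hom]
    exact hw
  exact hspan (mem_span_map_C_of_powerSeriesCoeff_mem (W := W) h)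

theorem eval₂_eq_zero_of_eval_eq_zero_of_constantCoeff_dense {L : Type*} [CommSemiring L]
    {ψ : K⟦X⟧ →+* L} (hψ : Function.Injective ψ) {S : Set (σ → K⟦X⟧)} {G : Set (σ → L)}
    (hSG : ∀ s ∈ S, ψ ∘ s ∈ G)
    (hdense : ∀ w : MvPolynomial σ K, (∀ s ∈ S, eval (PowerSeries.constantCoeff ∘ s) w = 0) →
      ∀ y ∈ G, eval₂ (ψ.comp PowerSeries.C) y w = 0)
    {p : MvPolynomial σ K⟦X⟧} (hp : ∀ s ∈ S, eval s p = 0) {y : σ → L} (hy : y ∈ G) :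
    eval₂ ψ y p = 0 := by
  have hslice := powerSeriesCoeff_mem_of_forall_eval_eq_zero
    (W := {w | ∀ y ∈ G, eval₂ (ψ.comp PowerSeries.C) y w = 0}) hdense
    (fun w hw s hs => hψ <| by
      rw [eval₂_comp, map_zero, eval₂_map]
      exact hw _ (hSG s hs))
    hp
  exact eval₂_eq_zero_of_forall_powerSeriesCoeff ψ y fun n => hslice n y hy

end Field

end MvPolynomial

theorem stmt12_general (K₁ : Type) [Field K₁]
    (K₂ : Type) [Field K₂] [Algebra K₁ K₂] (m : ℕ)
    (IH : Set (MvPolynomial (Fin m) (LaurentSeries K₂)))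
    -- the `K₁`-rational points of `G`
    (GK1 : Set (Fin m → K₁))
    -- the points of `G` over the algebraic closure of `K₂((t))`
    (GKt : Set (Fin m → Kt K₂))
    -- the points of the closed subvariety `H ⊆ G`, defined over `K₂((t))`
    (HKt : Set (Fin m → Kt K₂))
    (hHKt : HKt = {x | x ∈ GKt ∧ ∀ f ∈ IH,
      MvPolynomial.eval x (f.map (algebraMap (LaurentSeries K₂) (Kt K₂))) = 0})
    -- `G(K₁)` is Zariski-dense in `G` (a consequence of `G` being connected and
    -- `K₁` perfect or `G` reductive)
    (hdense : ∀ f : MvPolynomial (Fin m) (Kt K₂),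
      (∀ g ∈ GK1, MvPolynomial.eval (fun j => (k2ToKt K₂) (algebraMap K₁ K₂ (g j))) f = 0) →
      ∀ x ∈ GKt, MvPolynomial.eval x f = 0)
    -- every `K₁`-point of `G` is the constant term of a `K₂[[t]]`-point of `H`
    (hlift : ∀ g ∈ GK1, ∃ h : Fin m → PowerSeries K₂,
      (∀ j, PowerSeries.constantCoeff (R := K₂) (h j) = algebraMap K₁ K₂ (g j)) ∧
      (fun j => psToKt K₂ (h j)) ∈ HKt) :
    HKt = GKt := by
  set ι := algebraMap (LaurentSeries K₂) (Kt K₂)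
  have hH (y : Fin m → Kt K₂) (hy : y ∈ HKt) : y ∈ GKt ∧ ∀ f ∈ IH, eval y (f.map ι) = 0 := by
    rwa [hHKt] at hy
  refine Set.Subset.antisymm (fun y hy => (hH y hy).1) fun x hx => hHKt ▸ ⟨hx, fun f hf => ?_⟩
  obtain ⟨⟨c, hc⟩, P, hP⟩ := exists_map_eq_C_mul_of_isLocalization (nonZeroDivisors K₂⟦X⟧) f
  have hinj : Function.Injective (psToKt K₂) :=
    ι.injective.comp HahnSeries.ofPowerSeries_injective
  have hPf (y : Fin m → Kt K₂) : eval₂ (psToKt K₂) y P = psToKt K₂ c * eval y (f.map ι) := by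
    rw [← eval_map, show psToKt K₂ = ι.comp (algebraMap K₂⟦X⟧ (LaurentSeries K₂)) from rfl,
      ← map_map, hP, map_mul, map_C, eval_mul, eval_C, RingHom.comp_apply]
  have hPx := eval₂_eq_zero_of_eval_eq_zero_of_constantCoeff_dense hinj
    (S := {h | psToKt K₂ ∘ h ∈ HKt}) (fun _ hh => (hH _ hh).1)
    (fun w hw y hy => by
      change eval₂ (k2ToKt K₂) y w = 0
      rw [← eval_map]
      refine hdense _ (fun g hg => ?_) y hy
      obtain ⟨h, hconst, hhH⟩ := hlift g hg
      have hgh : (fun j => k2ToKt K₂ (algebraMap K₁ K₂ (g j)))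
          = k2ToKt K₂ ∘ (PowerSeries.constantCoeff ∘ h) := by
        funext j; simp [hconst]
      rw [eval_map, hgh, ← eval₂_comp, hw h hhH, map_zero])
    (fun h hh => hinj <| by
      rw [eval₂_comp, map_zero, hPf, (hH _ hh).2 f hf, mul_zero])
    hx
  rw [hPf] at hPx
  exact (mul_eq_zero.1 hPx).resolve_left ((map_ne_zero_iff _ hinj).2 (nonZeroDivisors.ne_zero hc))

/-- Let `K₁` be an infinite field and `G ≤ GL_n` a connected linear algebraic group
over `K₁` (with `K₁` perfect or `G` reductive, so that `G(K₁)` is Zariski-dense in `G`; this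
density, which is the only consequence of these hypotheses used, is hypothesis `hdense` below).
We view `G ⊆ GL_n ⊆ 𝔸^m` (`m = n²+1`) as the closed subvariety cut out by the set of polynomials
`IG` over `K₁`.  Let `K₂/K₁` be a field extension and let `H ⊆ G` be a closed subvariety defined
over `K₂((t))`, cut out inside `G` by polynomials `IH` over `K₂((t))`.  If every `g ∈ G(K₁)` is
the constant term of a `K₂[[t]]`-point of `H`, then `H = G` (as subvarieties of the affine space
over the algebraic closure of `K₂((t))`). -/
theorem stmt12 (K₁ : Type) [Field K₁] [Infinite K₁]
    (K₂ : Type) [Field K₂] [Algebra K₁ K₂] (m : ℕ)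
    (IG : Set (MvPolynomial (Fin m) K₁))
    (IH : Set (MvPolynomial (Fin m) (LaurentSeries K₂)))
    -- the `K₁`-rational points of `G`
    (GK1 : Set (Fin m → K₁)) (hGK1 : GK1 = {g | ∀ q ∈ IG, MvPolynomial.eval g q = 0})
    -- the points of `G` over the algebraic closure of `K₂((t))`
    (GKt : Set (Fin m → Kt K₂))
    (hGKt : GKt = {x | ∀ q ∈ IG,
      MvPolynomial.eval x (q.map ((k2ToKt K₂).comp (algebraMap K₁ K₂))) = 0})
    -- the points of the closed subvariety `H ⊆ G`, defined over `K₂((t))`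
    (HKt : Set (Fin m → Kt K₂))
    (hHKt : HKt = {x | x ∈ GKt ∧ ∀ f ∈ IH,
      MvPolynomial.eval x (f.map (algebraMap (LaurentSeries K₂) (Kt K₂))) = 0})
    -- `G(K₁)` is Zariski-dense in `G` (a consequence of `G` being connected and
    -- `K₁` perfect or `G` reductive)
    (hdense : ∀ f : MvPolynomial (Fin m) (Kt K₂),
      (∀ g ∈ GK1, MvPolynomial.eval (fun j => (k2ToKt K₂) (algebraMap K₁ K₂ (g j))) f = 0) →
      ∀ x ∈ GKt, MvPolynomial.eval x f = 0)
    -- every `K₁`-point of `G` is the constant term of a `K₂[[t]]`-point of `H`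
    (hlift : ∀ g ∈ GK1, ∃ h : Fin m → PowerSeries K₂,
      (∀ j, PowerSeries.constantCoeff (R := K₂) (h j) = algebraMap K₁ K₂ (g j)) ∧
      (fun j => psToKt K₂ (h j)) ∈ HKt) :
    HKt = GKt :=
  stmt12_general K₁ K₂ m IH GK1 GKt HKt hHKt hdense hlift
end
end

section
/- Let G be a connected reductive linear algebraic group of rank r defined over F_q, with a maximal torus T split over F_q via an F_q-isomorphism γ : G_m^r → T. Then there exist pairwise distinct irreducible polynomials p₁,…,p_r ∈ F_q[t] with constant term 1 such that, setting g = γ(p₁,…,p_r) ∈ T(F_q[t]_{(t)}): (a) g ≡ I mod t, and (b) for every g₀ ∈ T(F_q), the element g₀·g generates a Zariski-dense subgroup of T; in particular the centralizer of g₀·g in G equals T. -/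
/-- The `A`-points of the linear algebraic group `G ≤ GL_n` cut out over `𝔽` by the set of
polynomials `I`, for an `𝔽`-ring `A` given by a ring homomorphism `ι : 𝔽 →+* A`. -/
def grpPts {𝔽 A : Type*} [CommRing 𝔽] [CommRing A] (ι : 𝔽 →+* A) {n : ℕ}
    (I : Set (MvPolynomial (Fin n × Fin n) 𝔽)) : Set (Matrix (Fin n) (Fin n) A) :=
  {M | IsUnit M.det ∧ ∀ f ∈ I, MvPolynomial.eval₂ ι (fun ij => M ij.1 ij.2) f = 0}

/-- Evaluation of a polynomial parametrization `Γ` of a split torus (entries are polynomials in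
the coordinates of `G_m^r` and their inverses) at a point `y ∈ G_m^r(A) = (Aˣ)^r`. -/
def torusPt {𝔽 A : Type*} [CommRing 𝔽] [CommRing A] (ι : 𝔽 →+* A) {n r : ℕ}
    (Γ : Matrix (Fin n) (Fin n) (MvPolynomial (Fin r × Bool) 𝔽)) (y : Fin r → Aˣ) :
    Matrix (Fin n) (Fin n) A :=
  Γ.map (MvPolynomial.eval₂ ι (fun ib => if ib.2 then (y ib.1 : A) else ((y ib.1)⁻¹ : Aˣ)))


open Polynomial in
theorem infinite_irred (𝔽 : Type*) [Field 𝔽] :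
    {g : 𝔽[X] | Irreducible g ∧ g.coeff 0 = 1}.Infinite := by
  by_contra h
  rw [Set.not_infinite] at h
  set s : Finset 𝔽[X] := h.toFinset with hs
  set Q : 𝔽[X] := ∏ f ∈ s, f with hQ
  have hQ0 : Q ≠ 0 := by
    refine Finset.prod_ne_zero_iff.mpr fun f hf => ?_
    have : Irreducible f := (h.mem_toFinset.mp hf).1
    exact this.ne_zero
  set P : 𝔽[X] := X * Q + 1 with hP
  have hdeg : 0 < P.natDegree := by
    have h1 : (X * Q).natDegree = 1 + Q.natDegree := by
      rw [natDegree_mul X_ne_zero hQ0, natDegree_X]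
    have : P.natDegree = (X * Q).natDegree := by
      rw [hP, ← Polynomial.C_1, natDegree_add_C]
    omega
  have hPunit : ¬ IsUnit P := not_isUnit_of_natDegree_pos P hdeg
  obtain ⟨g, hmonic, hgirr, hgdvd⟩ := P.exists_monic_irreducible_factor hPunit
  have hevalP : P.eval 0 = 1 := by simp [hP]
  have hg0 : g.coeff 0 ≠ 0 := by
    intro h0
    obtain ⟨q, hq⟩ := hgdvd
    have : P.eval 0 = 0 := by
      rw [hq, eval_mul, ← coeff_zero_eq_eval_zero, h0, zero_mul]
    rw [hevalP] at this; exact one_ne_zero this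
  set g' : 𝔽[X] := C (g.coeff 0)⁻¹ * g with hg'
  have hunit : IsUnit (C (g.coeff 0)⁻¹) := isUnit_C.mpr (isUnit_iff_ne_zero.mpr (inv_ne_zero hg0))
  have hassoc : Associated g g' := by
    rw [hg', mul_comm]
    exact associated_mul_unit_right g _ hunit
  have hg'irr : Irreducible g' := hassoc.irreducible hgirr
  have hg'c : g'.coeff 0 = 1 := by
    rw [hg', coeff_C_mul, inv_mul_cancel₀ hg0]
  have hg's : g' ∈ s := h.mem_toFinset.mpr ⟨hg'irr, hg'c⟩
  have hdvdQ : g' ∣ Q := Finset.dvd_prod_of_mem _ hg's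
  have hdvdP : g' ∣ P := (hassoc.dvd_iff_dvd_left).mp hgdvd
  have : g' ∣ 1 := by
    have : g' ∣ P - X * Q := dvd_sub hdvdP (Dvd.dvd.mul_left hdvdQ X)
    simpa [hP] using this
  exact hg'irr.not_isUnit (isUnit_of_dvd_one this)


open Polynomial in
theorem aux_ne {𝔽 : Type*} [Field 𝔽] {r : ℕ} (p : Fin r → 𝔽[X])
    (hinj : Function.Injective p) (hirr : ∀ i, Irreducible (p i))
    (hc : ∀ i, (p i).coeff 0 = 1) (c : Fin r → 𝔽ˣ) (a b : Fin r → ℕ)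
    (j : Fin r) (ha : a j ≠ 0) (hb : b j = 0) :
    ∏ i, (C (c i : 𝔽) * p i) ^ a i ≠ ∏ i, (C (c i : 𝔽) * p i) ^ b i := by
  have hprime : ∀ i, Prime (p i) := fun i =>
    (UniqueFactorizationMonoid.irreducible_iff_prime).mp (hirr i)
  intro heq
  have hdvd : p j ∣ ∏ i, (C (c i : 𝔽) * p i) ^ a i :=
    dvd_trans (dvd_pow (Dvd.intro_left _ rfl) ha)
      (Finset.dvd_prod_of_mem _ (Finset.mem_univ j))
  rw [heq] at hdvd
  obtain ⟨i, -, hi⟩ := (Prime.dvd_finset_prod_iff (hprime j) _).mp hdvd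
  have hi' : p j ∣ C (c i : 𝔽) * p i := (hprime j).dvd_of_dvd_pow hi
  rcases (hprime j).2.2 _ _ hi' with hC | hpi
  · exact (hprime j).not_isUnit (isUnit_of_dvd_unit hC (isUnit_C.mpr (c i).isUnit))
  · have hassoc : Associated (p j) (p i) := (hirr j).associated_of_dvd (hirr i) hpi
    obtain ⟨u, hu⟩ := hassoc
    obtain ⟨d, hdu, hd⟩ := Polynomial.isUnit_iff.mp u.isUnit
    have : p j * C d = p i := by rw [hd]; exact hu
    have hd1 : d = 1 := by
      have := congrArg (fun q => q.coeff 0) this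
      simpa [coeff_mul_C, hc j, hc i] using this
    have hpij : p j = p i := by rw [← this, hd1, map_one, mul_one]
    have hij : j = i := hinj hpij
    rw [← hij, hb, pow_zero] at hi
    exact (hprime j).not_isUnit (isUnit_of_dvd_one hi)

open Polynomial in
theorem part_b {𝔽 : Type*} [Field 𝔽] {r : ℕ} (p : Fin r → 𝔽[X])
    (hinj : Function.Injective p) (hirr : ∀ i, Irreducible (p i))
    (hc : ∀ i, (p i).coeff 0 = 1) (c : Fin r → 𝔽ˣ) (m : Fin r → ℤ) (hm : m ≠ 0) :
    (∏ i, (algebraMap 𝔽[X] (RatFunc 𝔽) (Polynomial.C (c i : 𝔽) * p i)) ^ m i) ≠ 1 := by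
  set x : Fin r → RatFunc 𝔽 := fun i => algebraMap 𝔽[X] (RatFunc 𝔽) (C (c i : 𝔽) * p i) with hx
  have hne : ∀ i, (C (c i : 𝔽) * p i) ≠ 0 := fun i =>
    mul_ne_zero (C_ne_zero.mpr (c i).ne_zero) (hirr i).ne_zero
  have hx0 : ∀ i, x i ≠ 0 := fun i => RatFunc.algebraMap_ne_zero (hne i)
  intro heq
  have key : (∏ i, x i ^ m i) * ∏ i, x i ^ (-(m i)).toNat = ∏ i, x i ^ (m i).toNat := by
    rw [← Finset.prod_mul_distrib]
    refine Finset.prod_congr rfl fun i _ => ?_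
    rw [← zpow_natCast (x i) (-(m i)).toNat, ← zpow_natCast (x i) (m i).toNat,
      ← zpow_add₀ (hx0 i)]
    congr 1
    omega
  rw [heq, one_mul] at key
  have himg : ∀ k : Fin r → ℕ, algebraMap 𝔽[X] (RatFunc 𝔽)
      (∏ i, (C (c i : 𝔽) * p i) ^ k i) = ∏ i, x i ^ k i := by
    intro k
    rw [map_prod]
    exact Finset.prod_congr rfl fun i _ => map_pow _ _ _
  have key2 : (∏ i, (C (c i : 𝔽) * p i) ^ (-(m i)).toNat)
      = ∏ i, (C (c i : 𝔽) * p i) ^ (m i).toNat := by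
    apply RatFunc.algebraMap_injective 𝔽
    rw [himg, himg, key]
  obtain ⟨j, hj0⟩ := Function.ne_iff.mp hm
  have hj : m j ≠ 0 := by simpa using hj0
  rcases lt_or_gt_of_ne hj with hneg | hpos
  · exact aux_ne p hinj hirr hc c _ _ j (by omega) (by omega) key2
  · exact aux_ne p hinj hirr hc c _ _ j (by omega) (by omega) key2.symm


/-- evaluation point of the torus coordinates -/
def ev {A : Type*} [CommRing A] {r : ℕ} (y : Fin r → Aˣ) : Fin r × Bool → A :=
  fun ib => if ib.2 then (y ib.1 : A) else ((y ib.1)⁻¹ : Aˣ)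

theorem density {A : Type*} [Field A] {r : ℕ} (u : Fin r → Aˣ)
    (hu : ∀ m : Fin r → ℤ, m ≠ 0 → (∏ i, (u i) ^ m i : Aˣ) ≠ 1)
    (F : MvPolynomial (Fin r × Bool) A)
    (hF : ∀ k : ℕ, MvPolynomial.eval (ev (u ^ k)) F = 0)
    (y : Fin r → Aˣ) : MvPolynomial.eval (ev y) F = 0 := by
  classical
  set e : ((Fin r × Bool) →₀ ℕ) → (Fin r → ℤ) :=
    fun d i => (d (i, true) : ℤ) - (d (i, false) : ℤ) with he
  set w : (Fin r → Aˣ) → (Fin r → ℤ) → Aˣ := fun z m => ∏ i, z i ^ m i with hw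
  -- step 1: evaluation as a sum of "Laurent monomials"
  have step1 : ∀ z : Fin r → Aˣ,
      MvPolynomial.eval (ev z) F = ∑ d ∈ F.support, F.coeff d * ((w z (e d) : Aˣ) : A) := by
    intro z
    rw [MvPolynomial.eval_eq]
    refine Finset.sum_congr rfl fun d _ => ?_
    congr 1
    calc ∏ ib ∈ d.support, ev z ib ^ d ib
        = ∏ ib : Fin r × Bool, ev z ib ^ d ib := by
          refine Finset.prod_subset (Finset.subset_univ _) fun ib _ hib => ?_
          rw [Finsupp.notMem_support_iff.mp hib, pow_zero]
      _ = ∏ i, ((z i ^ (e d i) : Aˣ) : A) := by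
          rw [Fintype.prod_prod_type]
          refine Finset.prod_congr rfl fun i _ => ?_
          have h1 : (z i ^ (e d i) : Aˣ)
              = z i ^ d (i, true) * ((z i)⁻¹) ^ d (i, false) := by
            show z i ^ ((d (i, true) : ℤ) - (d (i, false) : ℤ)) = _
            rw [zpow_sub, zpow_natCast, zpow_natCast, inv_pow]
          rw [Fintype.prod_bool, h1]
          simp [ev]
      _ = ((w z (e d) : Aˣ) : A) := (map_prod (Units.coeHom A) _ _).symm
  -- step 2: regroup by character m
  set S : Finset (Fin r → ℤ) := F.support.image e with hS
  set a : (Fin r → ℤ) → A :=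
    fun m => ∑ d ∈ F.support.filter (fun d => e d = m), F.coeff d with ha
  have step2 : ∀ z : Fin r → Aˣ,
      MvPolynomial.eval (ev z) F = ∑ m ∈ S, a m * ((w z m : Aˣ) : A) := by
    intro z
    rw [step1 z, ← Finset.sum_fiberwise_of_maps_to (fun d hd => Finset.mem_image_of_mem e hd)
      (fun d => F.coeff d * ((w z (e d) : Aˣ) : A))]
    refine Finset.sum_congr rfl fun m _ => ?_
    rw [ha, Finset.sum_mul]
    refine Finset.sum_congr rfl fun d hd => ?_
    rw [(Finset.mem_filter.mp hd).2]
  -- the values of distinct characters at u are distinct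
  have winj : Function.Injective (w u) := by
    intro m m' hmm
    by_contra hne
    apply hu (m - m') (sub_ne_zero.mpr hne)
    show (∏ i, u i ^ (m - m') i) = 1
    have : (∏ i, u i ^ (m - m') i) = (∏ i, u i ^ m i) * (∏ i, u i ^ m' i)⁻¹ := by
      rw [← Finset.prod_inv_distrib, ← Finset.prod_mul_distrib]
      refine Finset.prod_congr rfl fun i _ => ?_
      rw [← zpow_neg, ← zpow_add, Pi.sub_apply, sub_eq_add_neg]
    have hmm' : (∏ i, u i ^ m i) = ∏ i, u i ^ m' i := hmm
    rw [this, hmm', mul_inv_cancel]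
  -- powers of u
  have hwpow : ∀ (k : ℕ) (m : Fin r → ℤ), w (u ^ k) m = (w u m) ^ k := by
    intro k m
    rw [hw]
    show (∏ i, (u ^ k) i ^ m i) = (∏ i, u i ^ m i) ^ k
    rw [← Finset.prod_pow]
    refine Finset.prod_congr rfl fun i _ => ?_
    show (u i ^ k) ^ m i = (u i ^ m i) ^ k
    rw [← zpow_natCast (u i) k, ← zpow_mul, mul_comm, zpow_mul, zpow_natCast]
  have hk : ∀ k : ℕ, ∑ m ∈ S, a m * ((w u m : Aˣ) : A) ^ k = 0 := by
    intro k
    have h0 := hF k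
    rw [step2 (u ^ k)] at h0
    rw [← h0]
    refine Finset.sum_congr rfl fun m _ => ?_
    rw [hwpow k m, Units.val_pow_eq_pow_val]
  -- Vandermonde argument: all `a m` vanish
  set N := S.card with hN
  set σ : Fin N ≃ {x // x ∈ S} := S.equivFin.symm with hσ
  set z : Fin N → A := fun j => ((w u (σ j) : Aˣ) : A) with hz
  have hzinj : Function.Injective z := by
    intro j j' hjj
    have h1 : w u (σ j : Fin r → ℤ) = w u (σ j' : Fin r → ℤ) := Units.ext hjj
    exact σ.injective (Subtype.ext (winj h1))
  have hdet : (Matrix.vandermonde z).det ≠ 0 := Matrix.det_vandermonde_ne_zero_iff.mpr hzinj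
  set v : Fin N → A := fun j => a (σ j) with hv
  have hvec : Matrix.vecMul v (Matrix.vandermonde z) = 0 := by
    funext k
    show ∑ j, v j * Matrix.vandermonde z j k = 0
    calc ∑ j, v j * Matrix.vandermonde z j k
        = ∑ j, a (σ j) * ((w u (σ j : Fin r → ℤ) : Aˣ) : A) ^ (k : ℕ) :=
          Finset.sum_congr rfl fun j _ => by rw [Matrix.vandermonde_apply]
      _ = ∑ x : {x // x ∈ S}, a (x : Fin r → ℤ) * ((w u (x : Fin r → ℤ) : Aˣ) : A) ^ (k : ℕ) :=
          Equiv.sum_comp σ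
            (fun x => a (x : Fin r → ℤ) * ((w u (x : Fin r → ℤ) : Aˣ) : A) ^ (k : ℕ))
      _ = ∑ m ∈ S, a m * ((w u m : Aˣ) : A) ^ (k : ℕ) :=
          Finset.sum_coe_sort S (fun m => a m * ((w u m : Aˣ) : A) ^ (k : ℕ))
      _ = 0 := hk k
  have hinj := (Matrix.vecMul_injective_iff_isUnit.mpr
    ((Matrix.isUnit_iff_isUnit_det _).mpr (isUnit_iff_ne_zero.mpr hdet)))
  have hv0 : v = 0 :=
    hinj (show Matrix.vecMul v _ = Matrix.vecMul 0 _ by rw [hvec, Matrix.zero_vecMul])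
  have haz : ∀ m ∈ S, a m = 0 := by
    intro m hm
    have h2 : v (σ.symm ⟨m, hm⟩) = 0 := by rw [hv0]; rfl
    simpa [hv] using h2
  rw [step2 y]
  exact Finset.sum_eq_zero fun m hm => by rw [haz m hm, zero_mul]

theorem torusPt_eq {𝔽 A : Type*} [CommRing 𝔽] [CommRing A] (ι : 𝔽 →+* A) {n r : ℕ}
    (Γ : Matrix (Fin n) (Fin n) (MvPolynomial (Fin r × Bool) 𝔽)) (y : Fin r → Aˣ) :
    torusPt ι Γ y = Γ.map (MvPolynomial.eval₂ ι (ev y)) := rfl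


/-- Let `G ≤ GL_n` be a connected reductive linear algebraic group of rank `r`
defined over `F_q` (cut out by polynomials `IG`), with a maximal torus `T` split over `F_q` via
an `F_q`-isomorphism `γ : G_m^r → T` (encoded by the polynomial matrix `Γ`, which is a group
homomorphism landing in `G`, and maximality of `T` is encoded by the hypothesis `hmax` that the
centralizer of `T` in `G` is `T`).  Then there exist pairwise distinct irreducible polynomials
`p₁, …, p_r ∈ F_q[t]` with constant term `1` such that, setting `g = γ(p₁,…,p_r) ∈ T(F_q[t]_{(t)})`:
(a) `g ≡ I mod t`, and (b) for every `g₀ = γ(c) ∈ T(F_q)`, the element `g₀·g = γ(c·p)` generates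
a Zariski-dense subgroup of `T`, i.e. every nontrivial character of `T` (a nonzero monomial
`m ∈ ℤ^r` in the split coordinates) is nontrivial on it; in particular the (scheme-theoretic)
centralizer of `g₀·g` in `G` equals `T`. -/
theorem stmt15 {𝔽 : Type*} [Field 𝔽] [Fintype 𝔽] {n r : ℕ}
    (IG : Set (MvPolynomial (Fin n × Fin n) 𝔽))
    (Γ : Matrix (Fin n) (Fin n) (MvPolynomial (Fin r × Bool) 𝔽))
    -- `γ` is a group homomorphism into `G`
    (hΓone : ∀ (A : Type) [CommRing A], ∀ ι : 𝔽 →+* A,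
      torusPt ι Γ (fun _ => 1) = 1)
    (hΓmul : ∀ (A : Type) [CommRing A], ∀ ι : 𝔽 →+* A, ∀ y z : Fin r → Aˣ,
      torusPt ι Γ (y * z) = torusPt ι Γ y * torusPt ι Γ z)
    (hΓG : ∀ (A : Type) [CommRing A], ∀ ι : 𝔽 →+* A, ∀ y : Fin r → Aˣ,
      torusPt ι Γ y ∈ grpPts ι IG)
    -- `γ` is injective (a closed embedding of `G_m^r`)
    (hΓinj : ∀ (A : Type) [Field A], ∀ ι : 𝔽 →+* A,
      Function.Injective (torusPt ι Γ : (Fin r → Aˣ) → Matrix (Fin n) (Fin n) A))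
    -- `T` is a maximal torus: the centralizer of `T` in `G` is `T`
    (hmax : ∀ (A : Type) [Field A], ∀ ι : 𝔽 →+* A,
      ∀ M ∈ grpPts ι IG, (∀ y : Fin r → Aˣ, Commute M (torusPt ι Γ y)) →
        ∃ y : Fin r → Aˣ, M = torusPt ι Γ y) :
    ∃ p : Fin r → Polynomial 𝔽,
      Function.Injective p ∧
      (∀ i, Irreducible (p i)) ∧
      (∀ i, (p i).coeff 0 = 1) ∧
      -- (a) `g = γ(p) ≡ I mod t`: evaluating the coordinates at `t = 0` gives the tuple
      -- `(1,…,1)`, whence `γ(p)(0) = γ(1,…,1) = I`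
      (∀ i, Polynomial.eval 0 (p i) = 1) ∧
      -- (b) density: for every `g₀ = γ(c) ∈ T(F_q)` and every nonzero character `m ∈ ℤ^r`,
      -- the character is nontrivial on `g₀ g`, i.e. `∏ (c_i p_i)^{m_i} ≠ 1` in `F_q(t)`
      (∀ c : Fin r → 𝔽ˣ, ∀ m : Fin r → ℤ, m ≠ 0 →
        (∏ i, (algebraMap (Polynomial 𝔽) (RatFunc 𝔽) (Polynomial.C (c i : 𝔽) * p i)) ^ m i) ≠ 1) ∧
      -- in particular, the centralizer of `g₀·g` in `G` equals `T`: over any field extension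
      -- `A` of `F_q(t)`, any point of `G(A)` commuting with `g₀·g` lies in `T(A)`
      (∀ c : Fin r → 𝔽ˣ, ∀ gp : Fin r → (RatFunc 𝔽)ˣ,
        (∀ i, (gp i : RatFunc 𝔽) =
          algebraMap (Polynomial 𝔽) (RatFunc 𝔽) (Polynomial.C (c i : 𝔽) * p i)) →
        ∀ (A : Type) [Field A], ∀ ι' : RatFunc 𝔽 →+* A,
          ∀ M ∈ grpPts (ι'.comp (algebraMap 𝔽 (RatFunc 𝔽))) IG,
            Commute M ((torusPt (algebraMap 𝔽 (RatFunc 𝔽)) Γ gp).map ι') →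
            ∃ y : Fin r → Aˣ, M = torusPt (ι'.comp (algebraMap 𝔽 (RatFunc 𝔽))) Γ y) := by
  classical
  have emb : ℕ ↪ {g : Polynomial 𝔽 | Irreducible g ∧ g.coeff 0 = 1} :=
    (infinite_irred 𝔽).natEmbedding
  set p : Fin r → Polynomial 𝔽 := fun i => (emb (i : ℕ) : Polynomial 𝔽) with hp
  have hmem : ∀ i, Irreducible (p i) ∧ (p i).coeff 0 = 1 := fun i => (emb (i : ℕ)).2
  have hinj : Function.Injective p := fun i j h =>
    Fin.val_injective (emb.injective (Subtype.ext h))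
  have hirr : ∀ i, Irreducible (p i) := fun i => (hmem i).1
  have hc0 : ∀ i, (p i).coeff 0 = 1 := fun i => (hmem i).2
  refine ⟨p, hinj, hirr, hc0, ?_, part_b p hinj hirr hc0, ?_⟩
  · intro i
    rw [← Polynomial.coeff_zero_eq_eval_zero]
    exact hc0 i
  · intro c gp hgp A _ ι' M hM hcomm
    set ι : 𝔽 →+* A := ι'.comp (algebraMap 𝔽 (RatFunc 𝔽)) with hι
    set u : Fin r → Aˣ := fun i => Units.map (ι' : RatFunc 𝔽 →* A) (gp i) with hu
    -- the mapped torus point is the torus point at u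
    have hmap : (torusPt (algebraMap 𝔽 (RatFunc 𝔽)) Γ gp).map ι' = torusPt ι Γ u := by
      ext s t
      show ι' (MvPolynomial.eval₂ (algebraMap 𝔽 (RatFunc 𝔽)) (ev gp) (Γ s t))
        = MvPolynomial.eval₂ ι (ev u) (Γ s t)
      rw [MvPolynomial.eval₂_comp_left ι']
      congr 1
      funext ib
      rcases ib with ⟨i, b⟩
      cases b
      · show ι' (((gp i)⁻¹ : (RatFunc 𝔽)ˣ) : RatFunc 𝔽) = (((u i)⁻¹ : Aˣ) : A)
        rw [hu]
        simp only [← map_inv (Units.map (ι' : RatFunc 𝔽 →* A)), Units.coe_map]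
        rfl
      · show ι' ((gp i : RatFunc 𝔽)) = ((u i : Aˣ) : A)
        rw [hu]
        simp [Units.coe_map]
    -- multiplicative independence of u
    have hu_prop : ∀ m : Fin r → ℤ, m ≠ 0 → (∏ i, (u i) ^ m i : Aˣ) ≠ 1 := by
      intro m hm h1
      apply part_b p hinj hirr hc0 c m hm
      apply ι'.injective
      rw [map_one]
      have h2 : ((∏ i, (u i) ^ m i : Aˣ) : A) = 1 := by rw [h1]; rfl
      calc ι' (∏ i, (algebraMap (Polynomial 𝔽) (RatFunc 𝔽)) (Polynomial.C (c i : 𝔽) * p i) ^ m i)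
          = ∏ i, ((u i : A)) ^ m i := by
            rw [map_prod ι']
            refine Finset.prod_congr rfl fun i _ => ?_
            rw [map_zpow₀ ι', ← hgp i]
            rfl
        _ = ((∏ i, u i ^ m i : Aˣ) : A) := by
            rw [show ((∏ i, u i ^ m i : Aˣ) : A) = ∏ i, ((u i ^ m i : Aˣ) : A) from
              map_prod (Units.coeHom A) _ _]
            exact Finset.prod_congr rfl fun i _ => (Units.val_zpow_eq_zpow_val _ _).symm
        _ = 1 := h2
    -- torusPt is multiplicative in powers
    have htor_pow : ∀ k : ℕ, torusPt ι Γ (u ^ k) = (torusPt ι Γ u) ^ k := by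
      intro k
      induction k with
      | zero =>
        rw [pow_zero, pow_zero]
        exact hΓone A ι
      | succ k ih =>
        rw [pow_succ, pow_succ, ← ih, ← hΓmul A ι]
    have hcomm' : Commute M (torusPt ι Γ u) := hmap ▸ hcomm
    have hcommk : ∀ k : ℕ, M * torusPt ι Γ (u ^ k) = torusPt ι Γ (u ^ k) * M := by
      intro k
      rw [htor_pow k]
      exact (hcomm'.pow_right k)
    -- commutation with all torus points via density
    have hall : ∀ y : Fin r → Aˣ, Commute M (torusPt ι Γ y) := by
      intro y
      have hent : ∀ s t : Fin n,
          (M * torusPt ι Γ y) s t - (torusPt ι Γ y * M) s t = 0 := by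
        intro s t
        set F : MvPolynomial (Fin r × Bool) A :=
          ∑ l, (MvPolynomial.C (M s l) * (Γ l t).map ι
            - (Γ s l).map ι * MvPolynomial.C (M l t)) with hF
        have heval : ∀ z : Fin r → Aˣ, MvPolynomial.eval (ev z) F
            = (M * torusPt ι Γ z) s t - (torusPt ι Γ z * M) s t := by
          intro z
          rw [hF, map_sum, Matrix.mul_apply, Matrix.mul_apply, ← Finset.sum_sub_distrib]
          refine Finset.sum_congr rfl fun l _ => ?_
          rw [map_sub, map_mul, map_mul, MvPolynomial.eval_C, MvPolynomial.eval_C]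
          rw [torusPt_eq, Matrix.map_apply, Matrix.map_apply,
            MvPolynomial.eval₂_eq_eval_map, MvPolynomial.eval₂_eq_eval_map]
        have hFk : ∀ k : ℕ, MvPolynomial.eval (ev (u ^ k)) F = 0 := by
          intro k
          rw [heval (u ^ k), hcommk k, sub_self]
        have := density u hu_prop F hFk y
        rw [heval y] at this
        exact this
      show M * torusPt ι Γ y = torusPt ι Γ y * M
      ext s t
      exact sub_eq_zero.mp (hent s t)
    exact hmax A ι M hM hall
end
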